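/- arXiv:2311.14128 — 10 statements merged into one kernel-verified Lean document; each statement's English description precedes it below -/
import Mathlib

section
/- Let f : [-1,1] → [-1,1] be continuous with f(0) = 0. If ⟨x₁,x₂⟩ is a positive radial departure of f and ⟨x₁',x₂'⟩ is a negative radial departure of f, then either x₁ < x₁' < 0 < x₂' < x₂ or x₁' < x₁ < 0 < x₂ < x₂'. -/
open Set

/-- A positive radial departure of `f`. -/
def PosRD (f : ℝ → ℝ) (x₁ x₂ : ℝ) : Prop :=
  -1 ≤ x₁ ∧ x₁ < 0 ∧ 0 < x₂ ∧ x₂ ≤ 1 ∧ f '' Ioo x₁ x₂ = Ioo (f x₁) (f x₂)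

/-- A negative radial departure of `f`. -/
def NegRD (f : ℝ → ℝ) (x₁ x₂ : ℝ) : Prop :=
  -1 ≤ x₁ ∧ x₁ < 0 ∧ 0 < x₂ ∧ x₂ ≤ 1 ∧ f '' Ioo x₁ x₂ = Ioo (f x₂) (f x₁)

/-- A radial departure of `f` (of either orientation). -/
def RadialDeparture (f : ℝ → ℝ) (x₁ x₂ : ℝ) : Prop := PosRD f x₁ x₂ ∨ NegRD f x₁ x₂

/-- A (right) departure of `g` (viewed as a map on `[0,1]`). -/
def Departure (g : ℝ → ℝ) (x : ℝ) : Prop := 0 < x ∧ x ≤ 1 ∧ g x ∉ g '' Ico 0 x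

/-- A left departure of `g` (viewed as a map on `[-1,0]`). -/
def LeftDeparture (g : ℝ → ℝ) (x : ℝ) : Prop := -1 ≤ x ∧ x < 0 ∧ g x ∉ g '' Ioc x 0

/-- A (right) contour point of `g`: a departure `α` such that every departure past `α`
is preceded (within `(α, x]`) by a departure of orientation opposite to that of `α`. -/
def ContourPoint (g : ℝ → ℝ) (α : ℝ) : Prop :=
  Departure g α ∧
    ∀ x, Departure g x → α < x → ∃ y, Departure g y ∧ α < y ∧ y ≤ x ∧ g α * g y < 0

/-- `[ym, yp]` is a liftable range for `t`. -/
def LiftableRange (t : ℝ → ℝ) (ym yp : ℝ) : Prop :=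
  -1 ≤ ym ∧ ym ≤ 0 ∧ 0 ≤ yp ∧ yp ≤ 1 ∧
  t '' Icc ym 0 ⊆ t '' Icc 0 1 ∧
  ¬ ∃ y₁ y₂, RadialDeparture t y₁ y₂ ∧ ym ≤ y₁ ∧ yp < y₂

/-- `f` is linear (affine) on the interval `[a,b]`. -/
def LinearOn (f : ℝ → ℝ) (a b : ℝ) : Prop :=
  ∀ x ∈ Icc a b, (b - a) * f x = (b - x) * f a + (x - a) * f b

/-- `f` is piecewise-linear on `[-1,1]`. -/
def PiecewiseLinear (f : ℝ → ℝ) : Prop :=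
  ∃ n : ℕ, ∃ c : ℕ → ℝ, c 0 = -1 ∧ c n = 1 ∧ (∀ i < n, c i < c (i + 1)) ∧
    ∀ i < n, LinearOn f (c i) (c (i + 1))

/-- `t` is the contour factor of `g` (for maps on `[0,1]`): the contour points of `g`
are `0 = α₀ < α₁ < ⋯ < α_n`, `t (i/n) = g (α i)`, and `t` is linear in between. -/
def IsContourFactor (g t : ℝ → ℝ) : Prop :=
  ∃ n : ℕ, 0 < n ∧ ∃ α : ℕ → ℝ, α 0 = 0 ∧ (∀ i < n, α i < α (i + 1)) ∧
    (∀ x, ContourPoint g x ↔ ∃ i, 1 ≤ i ∧ i ≤ n ∧ x = α i) ∧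
    (∀ i ≤ n, t ((i : ℝ) / (n : ℝ)) = g (α i)) ∧
    (∀ i < n, LinearOn t ((i : ℝ) / (n : ℝ)) (((i : ℝ) + 1) / (n : ℝ)))

/-- `t` is the radial contour factor of `f`: its restriction to `[0,1]` is the contour
factor of `f|[0,1]`, and `t|[-1,0] ∘ r` is the contour factor of `f|[-1,0] ∘ r`,
where `r x = -x`. -/
def IsRadialContourFactor (f t : ℝ → ℝ) : Prop :=
  IsContourFactor f t ∧ IsContourFactor (fun x => f (-x)) (fun x => t (-x))

/-- `f` is non-constant on each of `[0,1]` and `[-1,0]`. -/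
def NonConstSides (f : ℝ → ℝ) : Prop :=
  (∃ a ∈ Icc (0:ℝ) 1, ∃ b ∈ Icc (0:ℝ) 1, f a ≠ f b) ∧
  (∃ a ∈ Icc (-1:ℝ) 0, ∃ b ∈ Icc (-1:ℝ) 0, f a ≠ f b)

/-
Every interior point of a radial departure is mapped strictly between the images of the two
endpoints; applied at `0` this fixes the signs of `f` at the endpoints, so the two departures
share no endpoint. If they crossed, say `x₁ < x₁' < 0 < x₂ < x₂'`, then `x₁'` is interior to the
positive departure and `x₂` to the negative one, giving `f x₁' < f x₂ < f x₁'`; the other crossing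
is symmetric.
-/

variable {f : ℝ → ℝ} {x₁ x₂ x : ℝ}

namespace PosRD

theorem mapsTo (h : PosRD f x₁ x₂) : MapsTo f (Ioo x₁ x₂) (Ioo (f x₁) (f x₂)) :=
  h.2.2.2.2 ▸ mapsTo_image f _

theorem left_lt (h : PosRD f x₁ x₂) (hx : x ∈ Ioo x₁ x₂) : f x₁ < f x :=
  (h.mapsTo hx).1

theorem lt_right (h : PosRD f x₁ x₂) (hx : x ∈ Ioo x₁ x₂) : f x < f x₂ :=
  (h.mapsTo hx).2

theorem zero_mem (h : PosRD f x₁ x₂) : (0 : ℝ) ∈ Ioo x₁ x₂ := ⟨h.2.1, h.2.2.1⟩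

end PosRD

namespace NegRD

theorem mapsTo (h : NegRD f x₁ x₂) : MapsTo f (Ioo x₁ x₂) (Ioo (f x₂) (f x₁)) :=
  h.2.2.2.2 ▸ mapsTo_image f _

theorem right_lt (h : NegRD f x₁ x₂) (hx : x ∈ Ioo x₁ x₂) : f x₂ < f x :=
  (h.mapsTo hx).1

theorem lt_left (h : NegRD f x₁ x₂) (hx : x ∈ Ioo x₁ x₂) : f x < f x₁ :=
  (h.mapsTo hx).2

theorem zero_mem (h : NegRD f x₁ x₂) : (0 : ℝ) ∈ Ioo x₁ x₂ := ⟨h.2.1, h.2.2.1⟩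

end NegRD

theorem stmt0_general (f : ℝ → ℝ) (hf0 : f 0 = 0)
    (x₁ x₂ x₁' x₂' : ℝ) (hp : PosRD f x₁ x₂) (hn : NegRD f x₁' x₂') :
    (x₁ < x₁' ∧ x₁' < 0 ∧ 0 < x₂' ∧ x₂' < x₂) ∨
    (x₁' < x₁ ∧ x₁ < 0 ∧ 0 < x₂ ∧ x₂ < x₂') := by
  have hx₁ : f x₁ < 0 := hf0 ▸ hp.left_lt hp.zero_mem
  have hx₂ : 0 < f x₂ := hf0 ▸ hp.lt_right hp.zero_mem
  have hx₁' : 0 < f x₁' := hf0 ▸ hn.lt_left hn.zero_mem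
  have hx₂' : f x₂' < 0 := hf0 ▸ hn.right_lt hn.zero_mem
  obtain ⟨hx₁0, h0x₂⟩ := hp.zero_mem
  obtain ⟨hx₁'0, h0x₂'⟩ := hn.zero_mem
  rcases lt_or_gt_of_ne (show x₁ ≠ x₁' by rintro rfl; linarith) with h₁ | h₁ <;>
    rcases lt_or_gt_of_ne (show x₂ ≠ x₂' by rintro rfl; linarith) with h₂ | h₂
  · have h₁'₂ : f x₁' < f x₂ := hp.lt_right ⟨h₁, by linarith⟩
    have h₂₁' : f x₂ < f x₁' := hn.lt_left ⟨by linarith, h₂⟩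
    linarith
  · exact Or.inl ⟨h₁, hx₁'0, h0x₂', h₂⟩
  · exact Or.inr ⟨h₁, hx₁0, h0x₂, h₂⟩
  · have h₂'₁ : f x₂' < f x₁ := hn.right_lt ⟨h₁, by linarith⟩
    have h₁₂' : f x₁ < f x₂' := hp.left_lt ⟨by linarith, h₂⟩
    linarith

theorem stmt0 (f : ℝ → ℝ) (hf : Continuous f)
    (hmap : MapsTo f (Icc (-1:ℝ) 1) (Icc (-1:ℝ) 1)) (hf0 : f 0 = 0)
    (x₁ x₂ x₁' x₂' : ℝ) (hp : PosRD f x₁ x₂) (hn : NegRD f x₁' x₂') :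
    (x₁ < x₁' ∧ x₁' < 0 ∧ 0 < x₂' ∧ x₂' < x₂) ∨
    (x₁' < x₁ ∧ x₁ < 0 ∧ 0 < x₂ ∧ x₂ < x₂') :=
  stmt0_general f hf0 x₁ x₂ x₁' x₂' hp hn
end

section
/- Let f : [-1,1] → [-1,1] be continuous with f(0) = 0. If ⟨x₁,x₂⟩ is a positive radial departure of f and ⟨x₁',x₂'⟩ is a negative radial departure of f, then either f(x₁) < f(x₂') < 0 < f(x₁') < f(x₂) or f(x₂') < f(x₁) < 0 < f(x₂) < f(x₁'). -/
open Set

/-! Both image intervals contain `f 0 = 0`. Comparing the right endpoints `x₂, x₂'`, the nearer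
one lies inside the other departure, so its value lies strictly inside the other image interval;
likewise for the left endpoints. Of the four resulting combinations, two are contradictory and
the other two are the two alternatives of the theorem. -/

variable {f : ℝ → ℝ} {x₁ x₂ x₁' x₂' : ℝ}

theorem PosRD.apply_mem (hp : PosRD f x₁ x₂) {y : ℝ} (hy : y ∈ Ioo x₁ x₂) :
    f y ∈ Ioo (f x₁) (f x₂) :=
  hp.2.2.2.2 ▸ mem_image_of_mem f hy

theorem NegRD.apply_mem (hn : NegRD f x₁ x₂) {y : ℝ} (hy : y ∈ Ioo x₁ x₂) :
    f y ∈ Ioo (f x₂) (f x₁) :=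
  hn.2.2.2.2 ▸ mem_image_of_mem f hy

theorem PosRD.apply_left_neg_apply_right_pos (hp : PosRD f x₁ x₂) (hf0 : f 0 = 0) :
    f x₁ < 0 ∧ 0 < f x₂ :=
  hf0 ▸ hp.apply_mem ⟨hp.2.1, hp.2.2.1⟩

theorem NegRD.apply_right_neg_apply_left_pos (hn : NegRD f x₁ x₂) (hf0 : f 0 = 0) :
    f x₂ < 0 ∧ 0 < f x₁ :=
  hf0 ▸ hn.apply_mem ⟨hn.2.1, hn.2.2.1⟩

theorem PosRD.apply_lt_or_lt_of_negRD_right (hp : PosRD f x₁ x₂) (hn : NegRD f x₁' x₂')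
    (hf0 : f 0 = 0) : f x₂ < f x₁' ∨ f x₁ < f x₂' := by
  have hx₁' : x₁' < x₂ := hn.2.1.trans hp.2.2.1
  have hx₁ : x₁ < x₂' := hp.2.1.trans hn.2.2.1
  rcases lt_trichotomy x₂ x₂' with h | rfl | h
  · exact .inl (hn.apply_mem ⟨hx₁', h⟩).2
  · linarith [(hp.apply_left_neg_apply_right_pos hf0).2, (hn.apply_right_neg_apply_left_pos hf0).1]
  · exact .inr (hp.apply_mem ⟨hx₁, h⟩).1

theorem PosRD.apply_lt_or_lt_of_negRD_left (hp : PosRD f x₁ x₂) (hn : NegRD f x₁' x₂')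
    (hf0 : f 0 = 0) : f x₁' < f x₂ ∨ f x₂' < f x₁ := by
  have hx₂' : x₁ < x₂' := hp.2.1.trans hn.2.2.1
  have hx₂ : x₁' < x₂ := hn.2.1.trans hp.2.2.1
  rcases lt_trichotomy x₁ x₁' with h | rfl | h
  · exact .inl (hp.apply_mem ⟨h, hx₂⟩).2
  · linarith [(hp.apply_left_neg_apply_right_pos hf0).1, (hn.apply_right_neg_apply_left_pos hf0).2]
  · exact .inr (hn.apply_mem ⟨h, hx₂'⟩).1

theorem stmt1_general (f : ℝ → ℝ) (hf0 : f 0 = 0)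
    (x₁ x₂ x₁' x₂' : ℝ) (hp : PosRD f x₁ x₂) (hn : NegRD f x₁' x₂') :
    (f x₁ < f x₂' ∧ f x₂' < 0 ∧ 0 < f x₁' ∧ f x₁' < f x₂) ∨
    (f x₂' < f x₁ ∧ f x₁ < 0 ∧ 0 < f x₂ ∧ f x₂ < f x₁') := by
  obtain ⟨hx₁, hx₂⟩ := hp.apply_left_neg_apply_right_pos hf0
  obtain ⟨hx₂', hx₁'⟩ := hn.apply_right_neg_apply_left_pos hf0
  rcases hp.apply_lt_or_lt_of_negRD_right hn hf0 with hR | hR <;>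
    rcases hp.apply_lt_or_lt_of_negRD_left hn hf0 with hL | hL
  · linarith
  · exact .inr ⟨hL, hx₁, hx₂, hR⟩
  · exact .inl ⟨hR, hx₂', hx₁', hL⟩
  · linarith

theorem stmt1 (f : ℝ → ℝ) (hf : Continuous f)
    (hmap : MapsTo f (Icc (-1:ℝ) 1) (Icc (-1:ℝ) 1)) (hf0 : f 0 = 0)
    (x₁ x₂ x₁' x₂' : ℝ) (hp : PosRD f x₁ x₂) (hn : NegRD f x₁' x₂') :
    (f x₁ < f x₂' ∧ f x₂' < 0 ∧ 0 < f x₁' ∧ f x₁' < f x₂) ∨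
    (f x₂' < f x₁ ∧ f x₁ < 0 ∧ 0 < f x₂ ∧ f x₂ < f x₁') :=
  stmt1_general f hf0 x₁ x₂ x₁' x₂' hp hn
end

section
/- Let f, g : [-1,1] → [-1,1] be continuous maps with f(0) = g(0) = 0, and let x₁, x₂ satisfy -1 ≤ x₁ < 0 < x₂ ≤ 1. Then ⟨x₁,x₂⟩ is a positive radial departure of f ∘ g if and only if either (1) ⟨x₁,x₂⟩ is a positive radial departure of g and ⟨g(x₁),g(x₂)⟩ is a positive radial departure of f, or (2) ⟨x₁,x₂⟩ is a negative radial departure of g and ⟨g(x₂),g(x₁)⟩ is a negative radial departure of f. -/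
open Set

/-!
`S = g((x₁,x₂))` is order-connected because `g` is continuous, and its closure contains `g x₁` and
`g x₂`. If `f(S) = (f(g x₁), f(g x₂))`, then neither `g x₁` nor `g x₂` lies in `S` and they differ,
and an order-connected set adherent to two points outside it is the open interval between them.
As `0 = g 0 ∈ S`, these endpoints lie on opposite sides of `0`.
-/

theorem Set.OrdConnected.eq_Ioo_of_mem_closure {α : Type*} [LinearOrder α] [TopologicalSpace α]
    [OrderClosedTopology α] {S : Set α} (hS : S.OrdConnected) {a b : α} (hab : a < b)
    (ha : a ∈ closure S) (hb : b ∈ closure S) (haS : a ∉ S) (hbS : b ∉ S) : S = Ioo a b := by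
  have exists_lt {c z : α} (hc : c ∈ closure S) (hcz : c < z) : ∃ u ∈ S, u < z :=
    let ⟨u, hu, huS⟩ := mem_closure_iff_nhds.1 hc _ (Iio_mem_nhds hcz); ⟨u, huS, hu⟩
  have exists_gt {c z : α} (hc : c ∈ closure S) (hzc : z < c) : ∃ v ∈ S, z < v :=
    let ⟨v, hv, hvS⟩ := mem_closure_iff_nhds.1 hc _ (Ioi_mem_nhds hzc); ⟨v, hvS, hv⟩
  ext x
  refine ⟨fun hx => ⟨?_, ?_⟩, fun hx => ?_⟩
  · by_contra! hxa
    obtain ⟨v, hv, hav⟩ := exists_gt hb hab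
    exact haS (hS.out hx hv ⟨hxa, hav.le⟩)
  · by_contra! hbx
    obtain ⟨u, hu, hub⟩ := exists_lt ha hab
    exact hbS (hS.out hu hx ⟨hub.le, hbx⟩)
  · obtain ⟨u, hu, hux⟩ := exists_lt ha hx.1
    obtain ⟨v, hv, hxv⟩ := exists_gt hb hx.2
    exact hS.out hu hv ⟨hux.le, hxv.le⟩

theorem image_Ioo_eq_Ioo_or_of_image_comp {α β γ : Type*}
    [ConditionallyCompleteLinearOrder α] [TopologicalSpace α] [OrderTopology α] [DenselyOrdered α]
    [LinearOrder β] [TopologicalSpace β] [OrderClosedTopology β] [Preorder γ]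
    {f : β → γ} {g : α → β} {x₁ x₂ : α} (hlt : x₁ < x₂) (hg : ContinuousOn g (Icc x₁ x₂))
    (hfg : (f ∘ g) '' Ioo x₁ x₂ = Ioo (f (g x₁)) (f (g x₂))) :
    g '' Ioo x₁ x₂ = Ioo (g x₁) (g x₂) ∨ g '' Ioo x₁ x₂ = Ioo (g x₂) (g x₁) := by
  set S := g '' Ioo x₁ x₂
  rw [image_comp] at hfg
  have hS : S.OrdConnected :=
    (isPreconnected_Ioo.image g (hg.mono Ioo_subset_Icc_self)).ordConnected
  have mem_closure {x : α} (hx : x ∈ Icc x₁ x₂) : g x ∈ closure S := by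
    refine ((hg x hx).mono Ioo_subset_Icc_self).mem_closure_image ?_
    rwa [closure_Ioo hlt.ne]
  have hg₁ : g x₁ ∈ closure S := mem_closure (left_mem_Icc.2 hlt.le)
  have hg₂ : g x₂ ∈ closure S := mem_closure (right_mem_Icc.2 hlt.le)
  have hg₁S : g x₁ ∉ S := fun h => lt_irrefl _ (hfg.subset (mem_image_of_mem f h)).1
  have hg₂S : g x₂ ∉ S := fun h => lt_irrefl _ (hfg.subset (mem_image_of_mem f h)).2
  have hne : g x₁ ≠ g x₂ := by
    intro h
    have : (Ioo (f (g x₁)) (f (g x₂))).Nonempty := hfg ▸ ((nonempty_Ioo.2 hlt).image g).image f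
    simp [h] at this
  rcases hne.lt_or_gt with h | h
  · exact .inl (hS.eq_Ioo_of_mem_closure h hg₁ hg₂ hg₁S hg₂S)
  · exact .inr (hS.eq_Ioo_of_mem_closure h hg₂ hg₁ hg₂S hg₁S)

theorem stmt2_general (f g : ℝ → ℝ) (hg : Continuous g)
    (hgmap : MapsTo g (Icc (-1:ℝ) 1) (Icc (-1:ℝ) 1))
    (hg0 : g 0 = 0)
    (x₁ x₂ : ℝ) :
    PosRD (f ∘ g) x₁ x₂ ↔
      (PosRD g x₁ x₂ ∧ PosRD f (g x₁) (g x₂)) ∨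
      (NegRD g x₁ x₂ ∧ NegRD f (g x₂) (g x₁)) := by
  constructor
  · rintro ⟨h1, h2, h3, h4, hfg⟩
    have hg₁ := hgmap ⟨h1, by linarith⟩
    have hg₂ := hgmap ⟨by linarith, h4⟩
    have hg0_mem : (0 : ℝ) ∈ g '' Ioo x₁ x₂ := ⟨0, ⟨h2, h3⟩, hg0⟩
    rcases image_Ioo_eq_Ioo_or_of_image_comp (h2.trans h3) hg.continuousOn hfg with hS | hS <;>
      rw [image_comp, hS] at hfg <;> rw [hS] at hg0_mem
    · exact .inl ⟨⟨h1, h2, h3, h4, hS⟩, hg₁.1, hg0_mem.1, hg0_mem.2, hg₂.2, hfg⟩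
    · exact .inr ⟨⟨h1, h2, h3, h4, hS⟩, hg₂.1, hg0_mem.1, hg0_mem.2, hg₁.2, hfg⟩
  · rintro (⟨⟨h1, h2, h3, h4, hgI⟩, -, -, -, -, hfI⟩ | ⟨⟨h1, h2, h3, h4, hgI⟩, -, -, -, -, hfI⟩) <;>
      exact ⟨h1, h2, h3, h4, by rw [image_comp, hgI, hfI, Function.comp_apply, Function.comp_apply]⟩

theorem stmt2 (f g : ℝ → ℝ) (hf : Continuous f) (hg : Continuous g)
    (hfmap : MapsTo f (Icc (-1:ℝ) 1) (Icc (-1:ℝ) 1))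
    (hgmap : MapsTo g (Icc (-1:ℝ) 1) (Icc (-1:ℝ) 1))
    (hf0 : f 0 = 0) (hg0 : g 0 = 0)
    (x₁ x₂ : ℝ) (h1 : -1 ≤ x₁) (h2 : x₁ < 0) (h3 : 0 < x₂) (h4 : x₂ ≤ 1) :
    PosRD (f ∘ g) x₁ x₂ ↔
      (PosRD g x₁ x₂ ∧ PosRD f (g x₁) (g x₂)) ∨
      (NegRD g x₁ x₂ ∧ NegRD f (g x₂) (g x₁)) :=
  stmt2_general f g hg hgmap hg0 x₁ x₂
end

section
/- Let f, g : [-1,1] → [-1,1] be continuous maps with f(0) = g(0) = 0, and let x₁, x₂ satisfy -1 ≤ x₁ < 0 < x₂ ≤ 1. Then ⟨x₁,x₂⟩ is a negative radial departure of f ∘ g if and only if either (1) ⟨x₁,x₂⟩ is a positive radial departure of g and ⟨g(x₁),g(x₂)⟩ is a negative radial departure of f, or (2) ⟨x₁,x₂⟩ is a negative radial departure of g and ⟨g(x₂),g(x₁)⟩ is a positive radial departure of f. -/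
open Set

/-! Write `J = g '' Ioo x₁ x₂`. If `f '' J = Ioo (f (g x₂)) (f (g x₁))`, then `g x₁` and `g x₂`
are not in `J`, and they differ because `0 = f 0 ∈ f '' J` makes that interval nonempty. By the
intermediate value theorem, a continuous image of an open interval that omits both endpoint
values is exactly the open interval between them, so `J` is `Ioo (g x₁) (g x₂)` or
`Ioo (g x₂) (g x₁)`, and the orientation of `g` decides which case holds. -/

section

variable {α δ : Type*} [ConditionallyCompleteLinearOrder α] [TopologicalSpace α]
  [OrderTopology α] [DenselyOrdered α] [LinearOrder δ] [TopologicalSpace δ] [OrderClosedTopology δ]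
  {a b : α} {g : α → δ}

theorem image_Ioo_eq_Ioo_of_endpoints_notMem (hab : a ≤ b) (hg : ContinuousOn g (Icc a b))
    (hlt : g a < g b) (ha : g a ∉ g '' Ioo a b) (hb : g b ∉ g '' Ioo a b) :
    g '' Ioo a b = Ioo (g a) (g b) := by
  refine Subset.antisymm ?_ (intermediate_value_Ioo hab hg)
  rintro _ ⟨x, hx, rfl⟩
  -- A value of `g` beyond `g a` or `g b` would, by the intermediate value theorem on `[x, b]`
  -- or `[a, x]`, make that endpoint value an interior value.
  constructor
  · refine lt_of_not_ge fun hxa => ha ?_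
    rcases hxa.eq_or_lt with h | h
    · exact ⟨x, hx, h⟩
    · exact image_mono (Ioo_subset_Ioo_left hx.1.le)
        (intermediate_value_Ioo hx.2.le (hg.mono (Icc_subset_Icc_left hx.1.le)) ⟨h, hlt⟩)
  · refine lt_of_not_ge fun hbx => hb ?_
    rcases hbx.eq_or_lt with h | h
    · exact ⟨x, hx, h.symm⟩
    · exact image_mono (Ioo_subset_Ioo_right hx.2.le)
        (intermediate_value_Ioo hx.1.le (hg.mono (Icc_subset_Icc_right hx.2.le)) ⟨hlt, h⟩)

theorem image_Ioo_eq_Ioo_or_eq_Ioo_of_endpoints_notMem (hab : a ≤ b)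
    (hg : ContinuousOn g (Icc a b)) (hne : g a ≠ g b) (ha : g a ∉ g '' Ioo a b)
    (hb : g b ∉ g '' Ioo a b) :
    g '' Ioo a b = Ioo (g a) (g b) ∨ g '' Ioo a b = Ioo (g b) (g a) := by
  rcases hne.lt_or_gt with hlt | hgt
  · exact .inl (image_Ioo_eq_Ioo_of_endpoints_notMem hab hg hlt ha hb)
  · have := image_Ioo_eq_Ioo_of_endpoints_notMem (g := OrderDual.toDual ∘ g) hab hg hgt ha hb
    exact .inr (Set.ext fun y => by simpa using Set.ext_iff.1 this (OrderDual.toDual y))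

end

theorem stmt3_general (f g : ℝ → ℝ) (hg : Continuous g)
    (hgmap : MapsTo g (Icc (-1:ℝ) 1) (Icc (-1:ℝ) 1))
    (hf0 : f 0 = 0) (hg0 : g 0 = 0)
    (x₁ x₂ : ℝ) (h1 : -1 ≤ x₁) (h2 : x₁ < 0) (h3 : 0 < x₂) (h4 : x₂ ≤ 1) :
    NegRD (f ∘ g) x₁ x₂ ↔
      (PosRD g x₁ x₂ ∧ NegRD f (g x₁) (g x₂)) ∨
      (NegRD g x₁ x₂ ∧ PosRD f (g x₂) (g x₁)) := by
  constructor
  · rintro ⟨-, -, -, -, hfg⟩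
    rw [image_comp] at hfg
    have h0 : (0 : ℝ) ∈ g '' Ioo x₁ x₂ := ⟨0, ⟨h2, h3⟩, hg0⟩
    have hlt : f (g x₂) < f (g x₁) := by
      have h0' := hfg ▸ mem_image_of_mem f h0
      rw [hf0] at h0'
      exact h0'.1.trans h0'.2
    have hx₁ : g x₁ ∉ g '' Ioo x₁ x₂ := fun h => (hfg ▸ mem_image_of_mem f h).2.false
    have hx₂ : g x₂ ∉ g '' Ioo x₁ x₂ := fun h => (hfg ▸ mem_image_of_mem f h).1.false
    have hg₁ := hgmap ⟨h1, by linarith⟩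
    have hg₂ := hgmap ⟨by linarith, h4⟩
    rcases image_Ioo_eq_Ioo_or_eq_Ioo_of_endpoints_notMem (h2.trans h3).le hg.continuousOn
      (fun h => hlt.ne (by rw [h])) hx₁ hx₂ with hJ | hJ <;> rw [hJ] at h0 hfg
    · exact .inl ⟨⟨h1, h2, h3, h4, hJ⟩, hg₁.1, h0.1, h0.2, hg₂.2, hfg⟩
    · exact .inr ⟨⟨h1, h2, h3, h4, hJ⟩, hg₂.1, h0.1, h0.2, hg₁.2, hfg⟩
  · rintro (⟨⟨-, -, -, -, hg'⟩, -, -, -, -, hf'⟩ | ⟨⟨-, -, -, -, hg'⟩, -, -, -, -, hf'⟩) <;>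
      exact ⟨h1, h2, h3, h4, by rw [image_comp, hg', hf']; rfl⟩

theorem stmt3 (f g : ℝ → ℝ) (hf : Continuous f) (hg : Continuous g)
    (hfmap : MapsTo f (Icc (-1:ℝ) 1) (Icc (-1:ℝ) 1))
    (hgmap : MapsTo g (Icc (-1:ℝ) 1) (Icc (-1:ℝ) 1))
    (hf0 : f 0 = 0) (hg0 : g 0 = 0)
    (x₁ x₂ : ℝ) (h1 : -1 ≤ x₁) (h2 : x₁ < 0) (h3 : 0 < x₂) (h4 : x₂ ≤ 1) :
    NegRD (f ∘ g) x₁ x₂ ↔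
      (PosRD g x₁ x₂ ∧ NegRD f (g x₁) (g x₂)) ∨
      (NegRD g x₁ x₂ ∧ PosRD f (g x₂) (g x₁)) :=
  stmt3_general f g hg hgmap hf0 hg0 x₁ x₂ h1 h2 h3 h4
end

section
/- Let f : [0,1] → [-1,1] be a non-constant continuous map with f(0) = 0. Then f has at least one departure, i.e., there exists x > 0 with f(x) ∉ f([0,x)). -/
open Set

/- Take the first point `x` at which `|f|` attains its maximum on `[0,1]`. The maximum is
positive because `f` is non-constant and `f 0 = 0`, so `x > 0`; and every earlier point has
strictly smaller `|f|`, so `f x` is not taken on `[0,x)`. -/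

theorem IsCompact.exists_isMaxOn_forall_lt_of_lt {α β : Type*} [LinearOrder α] [TopologicalSpace α]
    [OrderClosedTopology α] [LinearOrder β] [TopologicalSpace β] [OrderClosedTopology β]
    {s : Set α} {h : α → β} (hs : IsCompact s) (hne : s.Nonempty) (hh : ContinuousOn h s) :
    ∃ x ∈ s, IsMaxOn h s x ∧ ∀ y ∈ s, y < x → h y < h x := by
  obtain ⟨m, hm, hmax⟩ := hs.exists_isMaxOn hne hh
  have hclosed : IsClosed (s ∩ h ⁻¹' {h m}) :=
    hh.preimage_isClosed_of_isClosed hs.isClosed isClosed_singleton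
  obtain ⟨x, ⟨hxs, hxm : h x = h m⟩, hleast⟩ :=
    (hs.of_isClosed_subset hclosed inter_subset_left).exists_isLeast ⟨m, hm, rfl⟩
  have hxmax : IsMaxOn h s x := fun y hy => (hmax hy).trans_eq hxm.symm
  refine ⟨x, hxs, hxmax, fun y hy hyx => (hxmax hy).lt_of_ne fun hxy => ?_⟩
  exact (hleast ⟨hy, hxy.trans hxm⟩).not_gt hyx

theorem departure_of_forall_abs_lt {g : ℝ → ℝ} {x : ℝ} (hx : x ∈ Ioc 0 1)
    (h : ∀ y ∈ Ico 0 x, |g y| < |g x|) : Departure g x :=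
  ⟨hx.1, hx.2, fun ⟨y, hy, hgy⟩ => (h y hy).ne (congrArg abs hgy)⟩

theorem stmt4_general (f : ℝ → ℝ) (hf : Continuous f) (hf0 : f 0 = 0)
    (hnc : ∃ a ∈ Icc (0:ℝ) 1, ∃ b ∈ Icc (0:ℝ) 1, f a ≠ f b) :
    ∃ x, Departure f x := by
  obtain ⟨x, hx, hmax, hfirst⟩ := isCompact_Icc.exists_isMaxOn_forall_lt_of_lt
    (nonempty_Icc.2 zero_le_one) (continuous_abs.comp hf).continuousOn
  have hmax_pos : 0 < |f x| := by
    obtain ⟨a, ha, b, hb, hab⟩ := hnc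
    by_contra! hle
    have hfa : f a = 0 := abs_nonpos_iff.1 ((hmax ha : |f a| ≤ |f x|).trans hle)
    have hfb : f b = 0 := abs_nonpos_iff.1 ((hmax hb : |f b| ≤ |f x|).trans hle)
    exact hab (hfa.trans hfb.symm)
  have hx_pos : 0 < x := hx.1.lt_of_ne (by rintro rfl; simp [hf0] at hmax_pos)
  exact ⟨x, departure_of_forall_abs_lt ⟨hx_pos, hx.2⟩ fun y hy =>
    hfirst y ⟨hy.1, hy.2.le.trans hx.2⟩ hy.2⟩

theorem stmt4 (f : ℝ → ℝ) (hf : Continuous f)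
    (hmap : MapsTo f (Icc (0:ℝ) 1) (Icc (-1:ℝ) 1)) (hf0 : f 0 = 0)
    (hnc : ∃ a ∈ Icc (0:ℝ) 1, ∃ b ∈ Icc (0:ℝ) 1, f a ≠ f b) :
    ∃ x, Departure f x :=
  stmt4_general f hf hf0 hnc
end

section
/- Let f : [0,1] → [-1,1] be a non-constant continuous map with f(0) = 0. Then f has at least one contour point: there exists a departure α of f such that for every departure x of f with x > α, there exists a departure y of f of orientation opposite to that of α with α < y ≤ x. -/
open Set

/-!
Replacing `f` by `-f` if necessary, `f` takes a positive value. Let `α` be the first point of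
`[0,1]` where `f` attains its maximum `M > 0`. Then `α` is a departure, and by the intermediate
value theorem `f([0,α]) ⊇ [0,M]`, so every departure `x > α` has `f x < 0`: `x` itself is the
required departure of opposite orientation.
-/

section Departure

variable {g : ℝ → ℝ} {x α : ℝ}

lemma departure_neg_iff : Departure (fun y => -g y) x ↔ Departure g x := by
  simp only [Departure, mem_image, neg_inj]

lemma contourPoint_neg_iff : ContourPoint (fun y => -g y) α ↔ ContourPoint g α := by
  simp only [ContourPoint, departure_neg_iff, neg_mul_neg]

lemma exists_departure_isLeast_preimage (hg : ContinuousOn g (Icc 0 1)) {z : ℝ}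
    (hz : z ∈ Icc 0 1) (hgz : g z ≠ g 0) :
    ∃ α, IsLeast (Icc 0 1 ∩ g ⁻¹' {g z}) α ∧ Departure g α := by
  have hcompact : IsCompact (Icc (0 : ℝ) 1 ∩ g ⁻¹' {g z}) :=
    isCompact_Icc.of_isClosed_subset
      (hg.preimage_isClosed_of_isClosed isClosed_Icc isClosed_singleton) inter_subset_left
  obtain ⟨α, hαmem, hαleast⟩ := hcompact.exists_isLeast ⟨z, hz, rfl⟩
  have hgα : g α = g z := hαmem.2
  have hα0 : 0 < α := hαmem.1.1.lt_of_ne fun h => hgz (h ▸ hgα).symm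
  refine ⟨α, ⟨hαmem, hαleast⟩, hα0, hαmem.1.2, ?_⟩
  rintro ⟨u, hu, hgu⟩
  exact (hαleast ⟨⟨hu.1, hu.2.le.trans hαmem.1.2⟩, hgu.trans hgα⟩).not_gt hu.2

lemma Departure.lt_of_isMaxOn (hg : ContinuousOn g (Icc 0 1)) (hα : Departure g α)
    (hmax : IsMaxOn g (Icc 0 1) α) (hx : Departure g x) (hαx : α < x) : g x < g 0 := by
  by_contra! hle
  have hxα : g x ∈ Icc (g 0) (g α) := ⟨hle, hmax ⟨hx.1.le, hx.2.1⟩⟩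
  obtain ⟨c, hc, hgc⟩ :=
    intermediate_value_Icc hα.1.le (hg.mono (Icc_subset_Icc_right hα.2.1)) hxα
  exact hx.2.2 ⟨c, ⟨hc.1, hc.2.trans_lt hαx⟩, hgc⟩

end Departure

lemma exists_contourPoint_of_pos {f : ℝ → ℝ} (hf : ContinuousOn f (Icc 0 1)) (hf0 : f 0 = 0)
    {x : ℝ} (hx : x ∈ Icc 0 1) (hfx : 0 < f x) : ∃ α, ContourPoint f α := by
  obtain ⟨z, hz, hmax⟩ := isCompact_Icc.exists_isMaxOn ⟨x, hx⟩ hf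
  have hfz : 0 < f z := hfx.trans_le (hmax hx)
  obtain ⟨α, ⟨⟨-, hfα⟩, -⟩, hα⟩ := exists_departure_isLeast_preimage hf hz (by linarith)
  have hmaxα : IsMaxOn f (Icc 0 1) α := fun y hy => (hmax hy).trans_eq hfα.symm
  refine ⟨α, hα, fun y hy hαy => ⟨y, hy, hαy, le_rfl, ?_⟩⟩
  have hfy : f y < 0 := hf0 ▸ hα.lt_of_isMaxOn hf hmaxα hy hαy
  exact mul_neg_of_pos_of_neg (hfz.trans_eq hfα.symm) hfy

theorem stmt5_general (f : ℝ → ℝ) (hf : Continuous f) (hf0 : f 0 = 0)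
    (hnc : ∃ a ∈ Icc (0:ℝ) 1, ∃ b ∈ Icc (0:ℝ) 1, f a ≠ f b) :
    ∃ α, ContourPoint f α := by
  obtain ⟨x, hx, hfx⟩ : ∃ x ∈ Icc (0:ℝ) 1, f x ≠ 0 := by
    obtain ⟨a, ha, b, hb, hab⟩ := hnc
    by_cases hfa : f a = 0
    · exact ⟨b, hb, fun hfb => hab (hfa.trans hfb.symm)⟩
    · exact ⟨a, ha, hfa⟩
  rcases hfx.lt_or_gt with hneg | hpos
  · have := exists_contourPoint_of_pos (f := fun y => -f y) hf.neg.continuousOn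
      (by simp [hf0]) hx (neg_pos.2 hneg)
    simpa only [contourPoint_neg_iff] using this
  · exact exists_contourPoint_of_pos hf.continuousOn hf0 hx hpos

theorem stmt5 (f : ℝ → ℝ) (hf : Continuous f)
    (hmap : MapsTo f (Icc (0:ℝ) 1) (Icc (-1:ℝ) 1)) (hf0 : f 0 = 0)
    (hnc : ∃ a ∈ Icc (0:ℝ) 1, ∃ b ∈ Icc (0:ℝ) 1, f a ≠ f b) :
    ∃ α, ContourPoint f α :=
  stmt5_general f hf hf0 hnc
end

section
/- Let t : [-1,1] → [-1,1] be continuous with t(0) = 0, let y < 0 satisfy t([0,1]) ⊇ t([y,0]), and let L(y) be the minimal L > 0 with t([0,L]) ⊇ t([y,0]). Then L(y) is a right departure of t, i.e., t(L(y)) ∉ t([0,L(y))). -/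
open Set

theorem stmt8 (t : ℝ → ℝ) (ht : Continuous t)
    (hmap : MapsTo t (Icc (-1:ℝ) 1) (Icc (-1:ℝ) 1)) (ht0 : t 0 = 0)
    (y Ly : ℝ) (hy : y < 0) (hsub : t '' Icc y 0 ⊆ t '' Icc 0 1)
    (hLy : IsLeast {L : ℝ | 0 < L ∧ t '' Icc y 0 ⊆ t '' Icc 0 L} Ly) :
    Departure t Ly := by
  obtain ⟨⟨hLpos, hKsub⟩, hmin⟩ := hLy
  refine ⟨hLpos, hmin ⟨one_pos, hsub⟩, ?_⟩
  rintro ⟨c, ⟨hc0, hcLy⟩, hct⟩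
  -- hct : t c = t Ly, with 0 ≤ c < Ly
  have H : ∀ L, c < L → L < Ly → ¬ t '' Icc y 0 ⊆ t '' Icc 0 L := by
    intro L hcL hLLy hsubL
    exact absurd (hmin ⟨lt_of_le_of_lt hc0 hcL, hsubL⟩) (not_le.mpr hLLy)
  set L : ℕ → ℝ := fun n => Ly - (Ly - c) / (n + 2) with hLdef
  have hLc : ∀ n, c < L n := by
    intro n
    have h1 : (0:ℝ) < Ly - c := by linarith
    have h2 : (1:ℝ) < (n:ℝ) + 2 := by
      have : (0:ℝ) ≤ (n:ℝ) := Nat.cast_nonneg n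
      linarith
    have := div_lt_self h1 h2
    simp only [hLdef]
    linarith
  have hLlt : ∀ n, L n < Ly := by
    intro n
    have h1 : (0:ℝ) < Ly - c := by linarith
    have h2 : (0:ℝ) < (n:ℝ) + 2 := by positivity
    have := div_pos h1 h2
    simp only [hLdef]
    linarith
  have hLtend : Filter.Tendsto L Filter.atTop (nhds Ly) := by
    have h1 : Filter.Tendsto (fun n : ℕ => ((n:ℝ) + 2)) Filter.atTop Filter.atTop :=
      Filter.tendsto_atTop_add_const_right _ 2 tendsto_natCast_atTop_atTop
    have h2 : Filter.Tendsto (fun n : ℕ => (Ly - c) / ((n:ℝ) + 2)) Filter.atTop (nhds 0) :=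
      Filter.Tendsto.div_atTop tendsto_const_nhds h1
    have h3 := Filter.Tendsto.sub (tendsto_const_nhds (x := Ly)) h2
    simpa using h3
  have hvex : ∀ n, ∃ w ∈ t '' Icc y 0, w ∉ t '' Icc 0 (L n) := fun n =>
    Set.not_subset.mp (H _ (hLc n) (hLlt n))
  choose v hvK hvnot using hvex
  have hxex : ∀ n, ∃ x ∈ Icc (0:ℝ) Ly, t x = v n := fun n => hKsub (hvK n)
  choose x hxmem htx using hxex
  have hxgt : ∀ n, L n < x n := by
    intro n
    by_contra h
    push_neg at h
    exact hvnot n ⟨x n, ⟨(hxmem n).1, h⟩, htx n⟩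
  have hvne : ∀ n, v n ≠ t Ly := by
    intro n h
    exact hvnot n ⟨c, ⟨hc0, (hLc n).le⟩, by rw [hct, ← h]⟩
  have hxlt : ∀ n, x n < Ly := by
    intro n
    rcases lt_or_eq_of_le (hxmem n).2 with h | h
    · exact h
    · exact absurd ((htx n).symm.trans (congrArg t h)) (hvne n)
  have hxtend : Filter.Tendsto x Filter.atTop (nhds Ly) :=
    tendsto_of_tendsto_of_tendsto_of_le_of_le hLtend tendsto_const_nhds
      (fun n => (hxgt n).le) (fun n => (hxlt n).le)
  have hvtend : Filter.Tendsto v Filter.atTop (nhds (t Ly)) := by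
    have h1 := (ht.tendsto Ly).comp hxtend
    have h2 : (t ∘ x) = v := funext htx
    rwa [h2] at h1
  have hc_x : ∀ n, c < x n := fun n => (hLc n).trans (hxgt n)
  have hsides : {n | t Ly < v n}.Infinite ∨ {n | v n < t Ly}.Infinite := by
    by_contra h
    push_neg at h
    have huniv : ({n | t Ly < v n} ∪ {n | v n < t Ly}) = (univ : Set ℕ) := by
      ext n
      simp only [Set.mem_union, Set.mem_setOf_eq, Set.mem_univ, iff_true]
      exact ((hvne n).lt_or_gt).symm
    have hfin : (univ : Set ℕ).Finite := huniv ▸ h.1.union h.2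
    exact Set.infinite_univ hfin
  rcases hsides with hS | hS
  · obtain ⟨n₁, hn₁⟩ := hS.nonempty
    have hev1 : ∀ᶠ n in Filter.atTop, x n₁ < L n :=
      hLtend.eventually (eventually_gt_nhds (hxlt n₁))
    have hev2 : ∀ᶠ n in Filter.atTop, v n < v n₁ :=
      hvtend.eventually (eventually_lt_nhds hn₁)
    obtain ⟨N, hN⟩ := Filter.eventually_atTop.mp (hev1.and hev2)
    obtain ⟨n₂, hn₂S, hn₂N⟩ := hS.exists_gt N
    obtain ⟨hx12, hv12⟩ := hN n₂ hn₂N.le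
    have hivt : Icc (t c) (t (x n₁)) ⊆ t '' Icc c (x n₁) :=
      intermediate_value_Icc (hc_x n₁).le ht.continuousOn
    have hmem : v n₂ ∈ Icc (t c) (t (x n₁)) := by
      rw [hct, htx n₁]
      exact ⟨hn₂S.le, hv12.le⟩
    obtain ⟨z, ⟨hz1, hz2⟩, htz⟩ := hivt hmem
    exact hvnot n₂ ⟨z, ⟨hc0.trans hz1, hz2.trans hx12.le⟩, htz⟩
  · obtain ⟨n₁, hn₁⟩ := hS.nonempty
    have hev1 : ∀ᶠ n in Filter.atTop, x n₁ < L n :=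
      hLtend.eventually (eventually_gt_nhds (hxlt n₁))
    have hev2 : ∀ᶠ n in Filter.atTop, v n₁ < v n :=
      hvtend.eventually (eventually_gt_nhds hn₁)
    obtain ⟨N, hN⟩ := Filter.eventually_atTop.mp (hev1.and hev2)
    obtain ⟨n₂, hn₂S, hn₂N⟩ := hS.exists_gt N
    obtain ⟨hx12, hv12⟩ := hN n₂ hn₂N.le
    have hivt : Icc (t (x n₁)) (t c) ⊆ t '' Icc c (x n₁) :=
      intermediate_value_Icc' (hc_x n₁).le ht.continuousOn
    have hmem : v n₂ ∈ Icc (t (x n₁)) (t c) := by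
      rw [hct, htx n₁]
      exact ⟨hv12.le, hn₂S.le⟩
    obtain ⟨z, ⟨hz1, hz2⟩, htz⟩ := hivt hmem
    exact hvnot n₂ ⟨z, ⟨hc0.trans hz1, hz2.trans hx12.le⟩, htz⟩
end

section
/- Let t, s, f : [-1,1] → [-1,1] be continuous with t(0) = s(0) = f(0) = 0 and f = t ∘ s. Suppose there exist 0 ≤ x < x' ≤ 1 and y⁻ < 0 ≤ y⁺ such that x is a positive right departure of s (or x = 0) with s(x) = y⁺, and s([x,x']) = [y⁻,y⁺]. Suppose moreover s₀ : [-1,1] → [-1,1] is a sign-preserving map with t ∘ s₀ = f. Then [y⁻,y⁺] is a liftable range for t. -/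
open Set

/-!
Suppose `⟨y₁, y₂⟩` were a radial departure of `t` with `ym ≤ y₁` and `yp < y₂`. Let `w` be the
first time `s` reaches `y₁`; before `w` the path `s` stays in `(y₁, y₂)`, because it stays below
`yp` (this is where the departure `x` enters). Now `t (s₀ w) = t y₁` forces the nonnegative point
`s₀ w` past `y₂`, so `s₀` crosses `y₂` at some `u < w`, giving `t y₂ = t (s u) ∈ t '' (y₁, y₂)`,
which a radial departure forbids. Condition (1) holds since `t ∘ s = t ∘ s₀` and `s₀` maps
`[x, x']` into `[0, 1]`.
-/

namespace RadialDeparture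

variable {t : ℝ → ℝ} {y₁ y₂ : ℝ}

lemma left_neg (h : RadialDeparture t y₁ y₂) : y₁ < 0 := by
  rcases h with ⟨-, h, -⟩ | ⟨-, h, -⟩ <;> exact h

lemma right_pos (h : RadialDeparture t y₁ y₂) : 0 < y₂ := by
  rcases h with ⟨-, -, h, -⟩ | ⟨-, -, h, -⟩ <;> exact h

lemma left_notMem_image (h : RadialDeparture t y₁ y₂) : t y₁ ∉ t '' Ioo y₁ y₂ := by
  rcases h with ⟨-, -, -, -, him⟩ | ⟨-, -, -, -, him⟩ <;> simp [him]

lemma right_notMem_image (h : RadialDeparture t y₁ y₂) : t y₂ ∉ t '' Ioo y₁ y₂ := by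
  rcases h with ⟨-, -, -, -, him⟩ | ⟨-, -, -, -, him⟩ <;> simp [him]

lemma apply_ne (h : RadialDeparture t y₁ y₂) : t y₁ ≠ t y₂ := by
  have h0 : t 0 ∈ t '' Ioo y₁ y₂ := mem_image_of_mem t ⟨h.left_neg, h.right_pos⟩
  rcases h with ⟨-, -, -, -, him⟩ | ⟨-, -, -, -, him⟩ <;> rw [him] at h0
  · exact (h0.1.trans h0.2).ne
  · exact (h0.1.trans h0.2).ne'

lemma not_exit_left (h : RadialDeparture t y₁ y₂) {s s₀ : ℝ → ℝ} {w : ℝ} (hw : 0 ≤ w)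
    (hs₀ : ContinuousOn s₀ (Icc 0 w)) (hs₀0 : s₀ 0 = 0) (hs₀w : 0 ≤ s₀ w)
    (hts : ∀ v ∈ Icc 0 w, t (s v) = t (s₀ v))
    (hsw : s w = y₁) (hstay : ∀ v ∈ Ico 0 w, s v ∈ Ioo y₁ y₂) : False := by
  have htw : t (s₀ w) = t y₁ := by rw [← hts w ⟨hw, le_rfl⟩, hsw]
  have hy₂_lt : y₂ < s₀ w := by
    rcases lt_trichotomy (s₀ w) y₂ with hlt | heq | hgt
    · exact absurd (htw ▸ mem_image_of_mem t ⟨h.left_neg.trans_le hs₀w, hlt⟩)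
        h.left_notMem_image
    · exact absurd (htw ▸ heq ▸ rfl) h.apply_ne
    · exact hgt
  obtain ⟨u, hu, hs₀u⟩ := intermediate_value_Ico hw hs₀ ⟨hs₀0.symm ▸ h.right_pos.le, hy₂_lt⟩
  have htu : t (s u) = t y₂ := by rw [hts u (Ico_subset_Icc_self hu), hs₀u]
  exact h.right_notMem_image (htu ▸ mem_image_of_mem t (hstay u hu))

end RadialDeparture

lemma exists_first_le {s : ℝ → ℝ} {a b c : ℝ} (hab : a ≤ b) (hs : ContinuousOn s (Icc a b))
    (ha : c < s a) (hb : s b ≤ c) : ∃ w ∈ Ioc a b, s w = c ∧ ∀ v ∈ Ico a w, c < s v := by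
  set A := Icc a b ∩ s ⁻¹' Iic c
  have hbA : b ∈ A := ⟨⟨hab, le_rfl⟩, hb⟩
  have hbdd : BddBelow A := ⟨a, fun v hv => hv.1.1⟩
  have hwA : sInf A ∈ A :=
    (hs.preimage_isClosed_of_isClosed isClosed_Icc isClosed_Iic).csInf_mem ⟨b, hbA⟩ hbdd
  have hbefore : ∀ v ∈ Ico a (sInf A), c < s v := fun v hv =>
    not_le.mp fun hvc => hv.2.not_ge (csInf_le hbdd ⟨⟨hv.1, hv.2.le.trans hwA.1.2⟩, hvc⟩)
  have haw : a < sInf A := hwA.1.1.lt_of_ne fun haw => (haw ▸ ha).not_ge hwA.2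
  obtain ⟨v, hv, hsv⟩ := intermediate_value_Icc' haw.le (hs.mono (Icc_subset_Icc_right hwA.1.2))
    ⟨hwA.2, ha.le⟩
  have hvw : v = sInf A := hv.2.eq_or_lt.resolve_right fun hlt => (hbefore v ⟨hv.1, hlt⟩).ne' hsv
  exact ⟨sInf A, ⟨haw, hwA.1.2⟩, hvw ▸ hsv, hbefore⟩

lemma Departure.apply_lt {s : ℝ → ℝ} {x : ℝ} (hd : Departure s x) (hs : ContinuousOn s (Icc 0 x))
    (h0 : s 0 ≤ s x) : ∀ v ∈ Ico 0 x, s v < s x := by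
  intro v hv
  by_contra! hle
  obtain ⟨v', hv', hsv'⟩ :=
    intermediate_value_Icc hv.1 (hs.mono (Icc_subset_Icc_right hv.2.le)) ⟨h0, hle⟩
  exact hd.2.2 ⟨v', ⟨hv'.1, hv'.2.trans_lt hv.2⟩, hsv'⟩

lemma apply_le_of_image_Icc_eq {s : ℝ → ℝ} {x x' ym yp : ℝ} (hs : ContinuousOn s (Icc 0 x))
    (hs0 : s 0 = 0)
    (hdep : (Departure s x ∧ 0 < s x) ∨ x = 0) (hsx : s x = yp)
    (himg : s '' Icc x x' = Icc ym yp) : ∀ v ∈ Icc 0 x', s v ≤ yp := by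
  intro v hv
  rcases le_or_gt x v with hxv | hvx
  · exact (himg ▸ mem_image_of_mem s ⟨hxv, hv.2⟩ : s v ∈ Icc ym yp).2
  · obtain ⟨hd, hpos⟩ := hdep.resolve_right (hv.1.trans_lt hvx).ne'
    exact hsx ▸ (hd.apply_lt hs (hs0.symm ▸ hpos.le) v ⟨hv.1, hvx⟩).le

lemma image_image_subset_of_comp_eq {t s s₀ : ℝ → ℝ} {A B : Set ℝ} (hts : t ∘ s = t ∘ s₀)
    (hs₀ : MapsTo s₀ A B) : t '' (s '' A) ⊆ t '' B := by
  rw [← image_comp, hts, image_comp]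
  exact image_mono hs₀.image_subset

theorem stmt9_general (t s f s₀ : ℝ → ℝ)
    (hs : Continuous s) (hs₀ : Continuous s₀)
    (hs0 : s 0 = 0)
    (hfs : f = t ∘ s)
    (hsmap : MapsTo s (Icc (-1:ℝ) 1) (Icc (-1:ℝ) 1))
    (hs₀map : MapsTo s₀ (Icc (-1:ℝ) 1) (Icc (-1:ℝ) 1))
    (hsign₁ : ∀ z, 0 ≤ z → 0 ≤ s₀ z) (hsign₂ : ∀ z, z ≤ 0 → s₀ z ≤ 0)
    (hfs₀ : f = t ∘ s₀)
    (x x' ym yp : ℝ) (h0x : 0 ≤ x) (hx'1 : x' ≤ 1)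
    (hym : ym < 0) (hyp : 0 ≤ yp)
    (hdep : (Departure s x ∧ 0 < s x) ∨ x = 0) (hsx : s x = yp)
    (himg : s '' Icc x x' = Icc ym yp) :
    LiftableRange t ym yp := by
  have hts : t ∘ s = t ∘ s₀ := hfs ▸ hfs₀
  have hs₀0 : s₀ 0 = 0 := le_antisymm (hsign₂ 0 le_rfl) (hsign₁ 0 le_rfl)
  have hdom : Icc x x' ⊆ Icc (-1) 1 := Icc_subset_Icc (by linarith) hx'1
  have hrange : Icc ym yp ⊆ Icc (-1) 1 := himg ▸ (hsmap.mono_left hdom).image_subset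
  have hs₀dom : MapsTo s₀ (Icc x x') (Icc 0 1) := fun v hv =>
    ⟨hsign₁ v (h0x.trans hv.1), (hs₀map (hdom hv)).2⟩
  refine ⟨(hrange ⟨le_rfl, hym.le.trans hyp⟩).1, hym.le, hyp,
    (hrange ⟨hym.le.trans hyp, le_rfl⟩).2, ?_, ?_⟩
  · calc t '' Icc ym 0 ⊆ t '' (s '' Icc x x') := himg ▸ image_mono (Icc_subset_Icc_right hyp)
      _ ⊆ t '' Icc 0 1 := image_image_subset_of_comp_eq hts hs₀dom
  · rintro ⟨y₁, y₂, hrd, hy₁, hy₂⟩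
    obtain ⟨z, hz, hsz⟩ : y₁ ∈ s '' Icc x x' := himg ▸ ⟨hy₁, hrd.left_neg.le.trans hyp⟩
    obtain ⟨w, hw, hsw, hbefore⟩ :=
      exists_first_le (h0x.trans hz.1) hs.continuousOn (hs0.symm ▸ hrd.left_neg) hsz.le
    have hbelow := apply_le_of_image_Icc_eq hs.continuousOn hs0 hdep hsx himg
    exact hrd.not_exit_left hw.1.le hs₀.continuousOn hs₀0 (hsign₁ w hw.1.le)
      (fun v _ => congrFun hts v) hsw fun v hv =>
        ⟨hbefore v hv, (hbelow v ⟨hv.1, hv.2.le.trans (hw.2.trans hz.2)⟩).trans_lt hy₂⟩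

theorem stmt9 (t s f s₀ : ℝ → ℝ)
    (ht : Continuous t) (hs : Continuous s) (hf : Continuous f) (hs₀ : Continuous s₀)
    (ht0 : t 0 = 0) (hs0 : s 0 = 0) (hf0 : f 0 = 0)
    (hfs : f = t ∘ s)
    (hsmap : MapsTo s (Icc (-1:ℝ) 1) (Icc (-1:ℝ) 1))
    (hs₀map : MapsTo s₀ (Icc (-1:ℝ) 1) (Icc (-1:ℝ) 1))
    (hsign₁ : ∀ z, 0 ≤ z → 0 ≤ s₀ z) (hsign₂ : ∀ z, z ≤ 0 → s₀ z ≤ 0)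
    (hfs₀ : f = t ∘ s₀)
    (x x' ym yp : ℝ) (h0x : 0 ≤ x) (hxx' : x < x') (hx'1 : x' ≤ 1)
    (hym : ym < 0) (hyp : 0 ≤ yp)
    (hdep : (Departure s x ∧ 0 < s x) ∨ x = 0) (hsx : s x = yp)
    (himg : s '' Icc x x' = Icc ym yp) :
    LiftableRange t ym yp :=
  stmt9_general t s f s₀ hs hs₀ hs0 hfs hsmap hs₀map hsign₁ hsign₂ hfs₀ x x' ym yp h0x hx'1 hym hyp
    hdep hsx himg
end

section
/- Let t : [-1,1] → [-1,1] be continuous with t(0) = 0, let y⁻ < 0 with t([0,1]) ⊇ t([y⁻,0]), let L(y⁻) be the minimal L > 0 with t([0,L]) ⊇ t([y⁻,0]), and let γ ∈ [0, L(y⁻)) be the largest right contour point of t that is less than L(y⁻) (or γ = 0 if there is none). Then t([γ, L(y⁻)]) = t([y⁻, L(y⁻)]). -/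
open Set

lemma contOn_union {f : ℝ → ℝ} {s t : Set ℝ} (hsc : IsClosed s) (htc : IsClosed t)
    (hs : ContinuousOn f s) (ht : ContinuousOn f t) : ContinuousOn f (s ∪ t) := by
  intro x hx
  apply ContinuousWithinAt.union
  · by_cases h : x ∈ s
    · exact hs x h
    · exact continuousWithinAt_of_notMem_closure (by rwa [hsc.closure_eq])
  · by_cases h : x ∈ t
    · exact ht x h
    · exact continuousWithinAt_of_notMem_closure (by rwa [htc.closure_eq])

lemma linearOn_contOn {f : ℝ → ℝ} {a b : ℝ} (hab : a < b) (h : LinearOn f a b) :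
    ContinuousOn f (Icc a b) := by
  have hc : ContinuousOn (fun x => ((b - x) * f a + (x - a) * f b) / (b - a)) (Icc a b) := by
    fun_prop
  apply hc.congr
  intro x hx
  have h' := h x hx
  rw [eq_div_iff (by linarith : b - a ≠ 0)]
  linarith

lemma chain_mono (c : ℕ → ℝ) (n : ℕ) (hlt : ∀ i < n, c i < c (i + 1)) :
    ∀ k ≤ n, c 0 ≤ c k := by
  intro k hk
  induction k with
  | zero => exact le_rfl
  | succ j ihj => exact le_trans (ihj (by omega)) (le_of_lt (hlt j (by omega)))

lemma pl_contOn {f : ℝ → ℝ} (h : PiecewiseLinear f) : ContinuousOn f (Icc (-1) 1) := by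
  obtain ⟨n, c, h0, hn, hlt, hlin⟩ := h
  have key : ∀ k ≤ n, ContinuousOn f (Icc (c 0) (c k)) := by
    intro k hk
    induction k with
    | zero => rw [Icc_self]; exact continuousOn_singleton f _
    | succ m ih =>
      have hm : m < n := hk
      have h1 : ContinuousOn f (Icc (c 0) (c m)) := ih (le_of_lt hm)
      have h2 : ContinuousOn f (Icc (c m) (c (m + 1))) := linearOn_contOn (hlt m hm) (hlin m hm)
      have hmono : c 0 ≤ c m := chain_mono c n hlt m (le_of_lt hm)
      rw [← Icc_union_Icc_eq_Icc hmono (le_of_lt (hlt m hm))]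
      exact contOn_union isClosed_Icc isClosed_Icc h1 h2
  have := key n le_rfl
  rwa [h0, hn] at this

lemma key_mem {t : ℝ → ℝ} (ht : ContinuousOn t (Icc 0 1)) {γ Ly a b v : ℝ}
    (hγ0 : 0 ≤ γ) (hLy1 : Ly ≤ 1) (ha : a ∈ Icc γ Ly) (hb : b ∈ Icc γ Ly)
    (h1 : t a ≤ v) (h2 : v ≤ t b) : v ∈ t '' Icc γ Ly := by
  have hsub : uIcc a b ⊆ Icc γ Ly := uIcc_subset_Icc ha hb
  have hivt : uIcc (t a) (t b) ⊆ t '' uIcc a b :=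
    intermediate_value_uIcc (ht.mono (hsub.trans (Icc_subset_Icc hγ0 hLy1)))
  have hv : v ∈ uIcc (t a) (t b) := mem_uIcc.2 (Or.inl ⟨h1, h2⟩)
  obtain ⟨u, hu, huv⟩ := hivt hv
  exact ⟨u, hsub hu, huv⟩

/-- orientation of a departure -/
lemma departure_sign {t : ℝ → ℝ} (ht : ContinuousOn t (Icc 0 1)) (ht0 : t 0 = 0)
    {x : ℝ} (hd : Departure t x) :
    (0 < t x ∧ ∀ u ∈ Ico 0 x, t u < t x) ∨ (t x < 0 ∧ ∀ u ∈ Ico 0 x, t x < t u) := by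
  obtain ⟨hx0, hx1, hni⟩ := hd
  have hkey : ∀ u ∈ Ico 0 x, t x ∉ uIcc (0 : ℝ) (t u) := by
    intro u hu hmem
    have husub : uIcc (0 : ℝ) u ⊆ Ico 0 x := by
      rw [uIcc_of_le hu.1]
      exact fun z hz => ⟨hz.1, lt_of_le_of_lt hz.2 hu.2⟩
    have hivt : uIcc (t 0) (t u) ⊆ t '' uIcc 0 u :=
      intermediate_value_uIcc (ht.mono (fun z hz => by
        have := husub hz
        exact ⟨this.1, le_trans this.2.le hx1⟩))
    rw [ht0] at hivt
    obtain ⟨z, hz, hzv⟩ := hivt hmem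
    exact hni ⟨z, husub hz, hzv⟩
  have htx0 : t x ≠ 0 := by
    intro h
    exact hkey 0 ⟨le_refl 0, hx0⟩ (by rw [h, ht0]; exact left_mem_uIcc)
  rcases htx0.lt_or_gt with hneg | hpos
  · refine Or.inr ⟨hneg, fun u hu => ?_⟩
    by_contra h
    push_neg at h
    exact hkey u hu (mem_uIcc.2 (Or.inr ⟨h, hneg.le⟩))
  · refine Or.inl ⟨hpos, fun u hu => ?_⟩
    by_contra h
    push_neg at h
    exact hkey u hu (mem_uIcc.2 (Or.inl ⟨hpos.le, h⟩))

theorem stmt11 (t : ℝ → ℝ) (hpl : PiecewiseLinear t) (ht0 : t 0 = 0)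
    (ym Ly γ : ℝ) (hym : ym < 0)
    (hsub : t '' Icc ym 0 ⊆ t '' Icc 0 1)
    (hLy : IsLeast {L : ℝ | 0 < L ∧ t '' Icc ym 0 ⊆ t '' Icc 0 L} Ly)
    (hγ : (ContourPoint t γ ∧ γ < Ly ∧ ∀ β, ContourPoint t β → β < Ly → β ≤ γ) ∨
          (γ = 0 ∧ ∀ β, ContourPoint t β → ¬ β < Ly)) :
    t '' Icc γ Ly = t '' Icc ym Ly := by
  have ht : ContinuousOn t (Icc 0 1) := (pl_contOn hpl).mono (Icc_subset_Icc (by norm_num) le_rfl)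
  have hLy0 : 0 < Ly := hLy.1.1
  have hLy1 : Ly ≤ 1 := hLy.2 ⟨one_pos, hsub⟩
  have htLy : ContinuousOn t (Icc 0 Ly) := ht.mono (Icc_subset_Icc le_rfl hLy1)
  -- Ly is a departure
  have hdLy : Departure t Ly := by
    refine ⟨hLy0, hLy1, ?_⟩
    rintro ⟨c, hc, hcv⟩
    obtain ⟨z, hz, hzmin⟩ := isCompact_Icc.exists_isMinOn (nonempty_Icc.2 hLy0.le) htLy
    obtain ⟨w, hw, hwmax⟩ := isCompact_Icc.exists_isMaxOn (nonempty_Icc.2 hLy0.le) htLy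
    rw [isMinOn_iff] at hzmin
    rw [isMaxOn_iff] at hwmax
    -- replace z, w by points in [0, Ly)
    have hz' : ∃ z' ∈ Ico 0 Ly, t z' = t z := by
      rcases lt_or_eq_of_le hz.2 with h | h
      · exact ⟨z, ⟨hz.1, h⟩, rfl⟩
      · exact ⟨c, hc, by rw [h]; exact hcv⟩
    have hw' : ∃ w' ∈ Ico 0 Ly, t w' = t w := by
      rcases lt_or_eq_of_le hw.2 with h | h
      · exact ⟨w, ⟨hw.1, h⟩, rfl⟩
      · exact ⟨c, hc, by rw [h]; exact hcv⟩
    obtain ⟨z', hz'm, hz'v⟩ := hz'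
    obtain ⟨w', hw'm, hw'v⟩ := hw'
    set L := max (max z' w') (Ly / 2) with hL
    have hL0 : 0 < L := lt_of_lt_of_le (by linarith : (0:ℝ) < Ly / 2) (le_max_right _ _)
    have hLlt : L < Ly := by
      apply max_lt (max_lt hz'm.2 hw'm.2) (by linarith)
    have hmemL : L ∈ {L : ℝ | 0 < L ∧ t '' Icc ym 0 ⊆ t '' Icc 0 L} := by
      refine ⟨hL0, hLy.1.2.trans ?_⟩
      rintro v ⟨u, hu, huv⟩
      have h1 : t z' ≤ v := by rw [hz'v, ← huv]; exact hzmin u hu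
      have h2 : v ≤ t w' := by rw [hw'v, ← huv]; exact hwmax u hu
      have haz : z' ∈ Icc 0 L := ⟨hz'm.1, le_trans (le_max_left _ _) (le_max_left _ _)⟩
      have haw : w' ∈ Icc 0 L := ⟨hw'm.1, le_trans (le_max_right _ _) (le_max_left _ _)⟩
      have := key_mem ht le_rfl (le_trans hLlt.le hLy1) haz haw h1 h2
      exact this
    exact absurd (hLy.2 hmemL) (not_le.2 hLlt)
  have hγ0 : 0 ≤ γ := by
    rcases hγ with ⟨hcγ, _, _⟩ | ⟨h0, _⟩
    · exact hcγ.1.1.le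
    · exact h0.ge
  -- main inclusion
  have himg : t '' Icc 0 Ly ⊆ t '' Icc γ Ly := by
    rcases hγ with ⟨hcγ, hγLy, _⟩ | ⟨h0, _⟩
    swap
    · rw [h0]
    · rintro v ⟨u, hu, huv⟩
      rcases le_or_gt γ u with h | h
      · exact ⟨u, ⟨h, hu.2⟩, huv⟩
      have huγ : u ∈ Ico 0 γ := ⟨hu.1, h⟩
      have hγmem : γ ∈ Icc γ Ly := ⟨le_rfl, hγLy.le⟩
      have hLymem : Ly ∈ Icc γ Ly := ⟨hγLy.le, le_rfl⟩
      rcases departure_sign ht ht0 hdLy with ⟨hLypos, hLyall⟩ | ⟨hLyneg, hLyall⟩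
      · -- Ly positively oriented
        have h2 : v ≤ t Ly := by
          rw [← huv]; exact (hLyall u ⟨hu.1, lt_trans h hγLy⟩).le
        rcases departure_sign ht ht0 hcγ.1 with ⟨hγpos, hγall⟩ | ⟨hγneg, hγall⟩
        · obtain ⟨y, hdy, hγy, hyLy, hsign⟩ := hcγ.2 Ly hdLy hγLy
          have hty : t y < 0 := by nlinarith
          rcases departure_sign ht ht0 hdy with ⟨hyp, _⟩ | ⟨_, hyall⟩
          · linarith
          have h1 : t y ≤ v := by
            rw [← huv]; exact (hyall u ⟨hu.1, lt_trans h hγy⟩).le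
          exact key_mem ht hγ0 hLy1 ⟨hγy.le, hyLy⟩ hLymem h1 h2
        · have h1 : t γ ≤ v := by rw [← huv]; exact (hγall u huγ).le
          exact key_mem ht hγ0 hLy1 hγmem hLymem h1 h2
      · -- Ly negatively oriented
        have h1 : t Ly ≤ v := by
          rw [← huv]; exact (hLyall u ⟨hu.1, lt_trans h hγLy⟩).le
        rcases departure_sign ht ht0 hcγ.1 with ⟨hγpos, hγall⟩ | ⟨hγneg, hγall⟩
        · have h2 : v ≤ t γ := by rw [← huv]; exact (hγall u huγ).le
          exact key_mem ht hγ0 hLy1 hLymem hγmem h1 h2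
        · obtain ⟨y, hdy, hγy, hyLy, hsign⟩ := hcγ.2 Ly hdLy hγLy
          have hty : 0 < t y := by nlinarith
          rcases departure_sign ht ht0 hdy with ⟨_, hyall⟩ | ⟨hyn, _⟩
          swap
          · linarith
          have h2 : v ≤ t y := by
            rw [← huv]; exact (hyall u ⟨hu.1, lt_trans h hγy⟩).le
          exact key_mem ht hγ0 hLy1 hLymem ⟨hγy.le, hyLy⟩ h1 h2
  apply Subset.antisymm
  · exact image_mono (Icc_subset_Icc_left (le_trans hym.le hγ0))
  · rw [← Icc_union_Icc_eq_Icc hym.le hLy0.le, image_union]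
    exact union_subset (subset_trans hLy.1.2 himg) himg
end

section
/- Let t : [-1,1] → [-1,1] be a piecewise-linear map with t(0) = 0, let [y⁻,y⁺] be a liftable range for t with y⁺ < γ, where γ is the largest right contour point of t below L(y⁻), and let γ₁ < γ₂ < ⋯ < γ_k = γ enumerate the right contour points of t strictly between y⁺ and L(y⁻), with γ_{k+1} = L(y⁻) and γ₀ the right contour point immediately preceding γ₁ (or 0). Then there exist points y⁻ ≤ δ_{k+1} < δ_k < ⋯ < δ₁ < 0 such that for each 1 ≤ i ≤ k+1: (1) δ_i is a left departure of t with t(δ_i) = t(γ_i), and (2) t([δ_i, y⁺]) ⊆ t([γ_{i-1}, γ_i]). -/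
open Set

/-!
Each `γ i` is a departure, so after replacing `t` by `-t` we may assume `t (γ i) > 0`, and then
`t < t (γ i)` on `[0, γ i)`. The value `t (γ i)` is taken on `[ym, 0]`: for `γ i < Ly` because
otherwise `t '' [ym, 0] ⊆ t '' [0, γ i]` (a value of `t` on `[ym, 0]` below `t '' [0, γ i]` would start
a radial departure ending at `γ i`), and for `γ i = Ly` because `Ly` is the first time a value of
`t '' [ym, 0]` is reached. Let `δ i` be the last such point of `[ym, 0]`. On `[δ i, 0]`, `t` stays at
least `min t '' [0, γ i]`, again because there is no radial departure, and since consecutive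
contour points have values of opposite signs this minimum is attained on `[γ (i - 1), γ i]`; the
intermediate value theorem gives the inclusion of images. Finally `t (δ (i + 1)) = t (γ (i + 1))` lies
strictly outside `t '' [0, γ i]` on the other side, which forces `δ (i + 1) < δ i`.
-/

open Filter Topology

variable {f : ℝ → ℝ}

lemma departure_neg_iff_s12 {x : ℝ} : Departure (-f) x ↔ Departure f x := by
  simp [Departure]

lemma leftDeparture_neg_iff {x : ℝ} : LeftDeparture (-f) x ↔ LeftDeparture f x := by
  simp [LeftDeparture]

lemma contourPoint_neg_iff_s12 {x : ℝ} : ContourPoint (-f) x ↔ ContourPoint f x := by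
  simp only [ContourPoint, departure_neg_iff_s12, Pi.neg_apply, neg_mul_neg]

lemma image_neg_eq (s : Set ℝ) : (-f) '' s = Neg.neg '' (f '' s) := by
  rw [image_image]; rfl

lemma image_neg_subset_image_neg_iff {s u : Set ℝ} : (-f) '' s ⊆ (-f) '' u ↔ f '' s ⊆ f '' u := by
  rw [image_neg_eq, image_neg_eq, image_subset_image_iff neg_injective]

lemma posRD_neg_iff {a b : ℝ} : PosRD (-f) a b ↔ NegRD f a b := by
  rw [PosRD, NegRD, image_neg_eq, Pi.neg_apply, Pi.neg_apply, ← image_neg_Ioo,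
    image_eq_image neg_injective]

lemma negRD_neg_iff {a b : ℝ} : NegRD (-f) a b ↔ PosRD f a b := by
  simpa using (posRD_neg_iff (f := -f)).symm

lemma radialDeparture_neg_iff {a b : ℝ} : RadialDeparture (-f) a b ↔ RadialDeparture f a b := by
  rw [RadialDeparture, RadialDeparture, posRD_neg_iff, negRD_neg_iff, or_comm]

lemma LinearOn.continuousOn {a b : ℝ} (hab : a < b) (h : LinearOn f a b) :
    ContinuousOn f (Icc a b) := by
  have hline : ContinuousOn (fun x => ((b - x) * f a + (x - a) * f b) / (b - a)) (Icc a b) :=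
    Continuous.continuousOn (by fun_prop)
  refine hline.congr fun x hx => ?_
  rw [eq_div_iff (sub_ne_zero.mpr hab.ne'), mul_comm, h x hx]

lemma PiecewiseLinear.continuousOn (h : PiecewiseLinear f) : ContinuousOn f (Icc (-1) 1) := by
  obtain ⟨n, c, hc0, hcn, hc, hlin⟩ := h
  suffices ∀ m ≤ n, c 0 ≤ c m ∧ ContinuousOn f (Icc (c 0) (c m)) by
    simpa [hc0, hcn] using (this n le_rfl).2
  intro m hm
  induction m with
  | zero => simp
  | succ m ih =>
    obtain ⟨h0m, hcont⟩ := ih (by omega)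
    have hstep := hc m (by omega)
    refine ⟨h0m.trans hstep.le, ?_⟩
    rw [← Icc_union_Icc_eq_Icc h0m hstep.le]
    exact hcont.union_of_isClosed ((hlin m (by omega)).continuousOn hstep) isClosed_Icc isClosed_Icc

namespace Departure

variable {γ : ℝ}

lemma apply_ne_zero (hf0 : f 0 = 0) (h : Departure f γ) : f γ ≠ 0 :=
  fun hγ => h.2.2 ⟨0, ⟨le_rfl, h.1⟩, by rw [hf0, hγ]⟩

lemma apply_lt_of_pos (hc : ContinuousOn f (Icc 0 1)) (hf0 : f 0 = 0) (h : Departure f γ)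
    (hpos : 0 < f γ) {x : ℝ} (hx : x ∈ Ico 0 γ) : f x < f γ := by
  by_contra! hle
  obtain ⟨c, hc, hfc⟩ := intermediate_value_Icc hx.1
    (hc.mono (Icc_subset_Icc le_rfl (hx.2.le.trans h.2.1)))
    (show f γ ∈ Icc (f 0) (f x) by rw [hf0]; exact ⟨hpos.le, hle⟩)
  exact h.2.2 ⟨c, ⟨hc.1, hc.2.trans_lt hx.2⟩, hfc⟩

lemma lt_apply_of_neg (hc : ContinuousOn f (Icc 0 1)) (hf0 : f 0 = 0) (h : Departure f γ)
    (hneg : f γ < 0) {x : ℝ} (hx : x ∈ Ico 0 γ) : f γ < f x :=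
  neg_lt_neg_iff.mp <| apply_lt_of_pos (f := -f) hc.neg (by simp [hf0])
    (departure_neg_iff_s12.mpr h) (by simpa using hneg) hx

end Departure

/-- The values at the departures increase, and the value at the supremum is their limit. -/
lemma departure_csSup_of_pos (hc : ContinuousOn f (Icc 0 1)) (hf0 : f 0 = 0) {S : Set ℝ}
    (hS : S.Nonempty) (hdep : ∀ x ∈ S, Departure f x ∧ 0 < f x) :
    Departure f (sSup S) ∧ 0 < f (sSup S) := by
  have hbdd : BddAbove S := ⟨1, fun x hx => (hdep x hx).1.2.1⟩
  obtain ⟨u, hu_mono, -, hu_tendsto, huS⟩ :=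
    (isLUB_csSup hS hbdd).exists_seq_monotone_tendsto hS
  have hu_pos (n : ℕ) : 0 < u n := (hdep _ (huS n)).1.1
  have hu_le (n : ℕ) : u n ≤ 1 := (hdep _ (huS n)).1.2.1
  have hβ : sSup S ∈ Icc (0 : ℝ) 1 :=
    ⟨(hu_pos 0).le.trans (le_csSup hbdd (huS 0)), csSup_le hS fun x hx => (hdep x hx).1.2.1⟩
  have hfu_mono : Monotone (f ∘ u) := fun m n hmn =>
    (hu_mono hmn).eq_or_lt.elim (fun h => by simp [h])
      fun h => ((hdep _ (huS n)).1.apply_lt_of_pos hc hf0 (hdep _ (huS n)).2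
        ⟨(hu_pos m).le, h⟩).le
  have hfu_tendsto : Tendsto (f ∘ u) atTop (𝓝 (f (sSup S))) :=
    (hc.continuousWithinAt hβ).tendsto.comp (tendsto_nhdsWithin_of_tendsto_nhds_of_eventually_within
      u hu_tendsto (Eventually.of_forall fun n => ⟨(hu_pos n).le, hu_le n⟩))
  have hfu_le := hfu_mono.ge_of_tendsto hfu_tendsto
  refine ⟨⟨(hu_pos 0).trans_le (le_csSup hbdd (huS 0)), hβ.2, ?_⟩,
    (hdep _ (huS 0)).2.trans_le (hfu_le 0)⟩
  rintro ⟨x, hx, hfx⟩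
  obtain ⟨n, hn⟩ := (hu_tendsto.eventually (eventually_gt_nhds hx.2)).exists
  have := (hdep _ (huS n)).1.apply_lt_of_pos hc hf0 (hdep _ (huS n)).2 ⟨hx.1, hn⟩
  exact (hfu_le n).not_gt (hfx ▸ this)

lemma Departure.exists_contourPoint_of_pos (hc : ContinuousOn f (Icc 0 1)) (hf0 : f 0 = 0)
    {y : ℝ} (hy : Departure f y) (hpos : 0 < f y) :
    ∃ β, ContourPoint f β ∧ y ≤ β ∧ ∀ w, Departure f w → y ≤ w → w ≤ β → 0 < f w := by
  set S := {x | Departure f x ∧ y ≤ x ∧ ∀ w, Departure f w → y ≤ w → w ≤ x → 0 < f w}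
  have hyS : y ∈ S := ⟨hy, le_rfl, fun w _ h₁ h₂ => le_antisymm h₂ h₁ ▸ hpos⟩
  have hbdd : BddAbove S := ⟨1, fun x hx => hx.1.2.1⟩
  obtain ⟨hβ, hβpos⟩ := departure_csSup_of_pos hc hf0 ⟨y, hyS⟩
    fun x hx => ⟨hx.1, hx.2.2 x hx.1 hx.2.1 le_rfl⟩
  have hβS : sSup S ∈ S := by
    refine ⟨hβ, le_csSup hbdd hyS, fun w hw hyw hwβ => hwβ.lt_or_eq.elim (fun hlt => ?_)
      fun h => h ▸ hβpos⟩
    obtain ⟨x, hxS, hwx⟩ := exists_lt_of_lt_csSup ⟨y, hyS⟩ hlt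
    exact hxS.2.2 w hw hyw hwx.le
  refine ⟨sSup S, ⟨hβ, fun x hx hβx => ?_⟩, hβS.2.1, hβS.2.2⟩
  by_contra! hsame
  have hxS : x ∈ S := by
    refine ⟨hx, hβS.2.1.trans hβx.le, fun w hw hyw hwx => ?_⟩
    rcases le_or_gt w (sSup S) with hwβ | hβw
    · exact hβS.2.2 w hw hyw hwβ
    · exact (nonneg_of_mul_nonneg_right (hsame w hw hβw hwx) hβpos).lt_of_ne'
        (hw.apply_ne_zero hf0)
  exact (le_csSup hbdd hxS).not_gt hβx

lemma Departure.exists_contourPoint (hc : ContinuousOn f (Icc 0 1)) (hf0 : f 0 = 0)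
    {y : ℝ} (hy : Departure f y) :
    ∃ β, ContourPoint f β ∧ y ≤ β ∧ ∀ w, Departure f w → y ≤ w → w ≤ β → 0 < f w * f y := by
  rcases (hy.apply_ne_zero hf0).lt_or_gt with hneg | hpos
  · obtain ⟨β, hβ, hyβ, hsame⟩ := exists_contourPoint_of_pos (f := -f) hc.neg (by simp [hf0])
      (departure_neg_iff_s12.mpr hy) (by simpa using hneg)
    refine ⟨β, contourPoint_neg_iff_s12.mp hβ, hyβ, fun w hw hyw hwβ => ?_⟩
    have := hsame w (departure_neg_iff_s12.mpr hw) hyw hwβ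
    exact mul_pos_of_neg_of_neg (by simpa using this) hneg
  · obtain ⟨β, hβ, hyβ, hsame⟩ := hy.exists_contourPoint_of_pos hc hf0 hpos
    exact ⟨β, hβ, hyβ, fun w hw hyw hwβ => mul_pos (hsame w hw hyw hwβ) hpos⟩

lemma ContourPoint.apply_mul_apply_neg (hc : ContinuousOn f (Icc 0 1)) (hf0 : f 0 = 0)
    {a b : ℝ} (ha : ContourPoint f a) (hb : Departure f b) (hab : a < b)
    (hnone : ∀ x ∈ Ioo a b, ¬ ContourPoint f x) : f a * f b < 0 := by
  by_contra! hsame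
  obtain ⟨y, hy, hay, hyb, hopp⟩ := ha.2 b hb hab
  obtain ⟨β, hβ, hyβ, hβsame⟩ := hy.exists_contourPoint hc hf0
  have hβb : β < b := by
    by_contra! hbβ
    have := hβsame b hb hyb hbβ
    nlinarith [mul_nonneg hsame (sq_nonneg (f y)), mul_neg_of_neg_of_pos hopp this]
  exact hnone β ⟨hay.trans_le hyβ, hβb⟩ hβ

lemma posRD_of_forall_mem_Ioo {a b : ℝ} (hc : ContinuousOn f (Icc a b)) (ha : -1 ≤ a)
    (ha0 : a < 0) (hb0 : 0 < b) (hb : b ≤ 1) (h : ∀ w ∈ Ioo a b, f a < f w ∧ f w < f b) :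
    PosRD f a b :=
  ⟨ha, ha0, hb0, hb, ((image_subset_iff (t := Ioo (f a) (f b))).mpr h).antisymm
    (intermediate_value_Ioo (ha0.trans hb0).le hc)⟩

/-- The radial departure starts at the last point of `[x, 0]` where `f ≤ f x`. -/
lemma exists_posRD (hc : ContinuousOn f (Icc (-1) 1)) (hf0 : f 0 = 0) {γ x : ℝ}
    (hγ : Departure f γ) (hpos : 0 < f γ) (hx : -1 ≤ x) (hx0 : x ≤ 0)
    (hlow : ∀ z ∈ Icc 0 γ, f x < f z) (hup : ∀ w ∈ Icc x 0, f w < f γ) :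
    ∃ y, x ≤ y ∧ PosRD f y γ := by
  have hK : IsClosed (Icc x 0 ∩ f ⁻¹' Iic (f x)) :=
    (hc.mono (Icc_subset_Icc hx (by norm_num))).preimage_isClosed_of_isClosed isClosed_Icc
      isClosed_Iic
  obtain ⟨y, ⟨hy, hfy⟩, hmax⟩ := (isCompact_Icc.of_isClosed_subset hK
    inter_subset_left).exists_isGreatest ⟨x, ⟨le_rfl, hx0⟩, le_refl (f x)⟩
  have hfx : f x < 0 := hf0 ▸ hlow 0 ⟨le_rfl, hγ.1.le⟩
  have hy0 : y < 0 := hy.2.lt_of_ne fun h => (hf0 ▸ h ▸ hfy : (0 : ℝ) ≤ f x).not_gt hfx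
  refine ⟨y, hy.1, posRD_of_forall_mem_Ioo (hc.mono (Icc_subset_Icc (hx.trans hy.1) hγ.2.1))
    (hx.trans hy.1) hy0 hγ.1 hγ.2.1 fun w hw => ?_⟩
  rcases le_or_gt w 0 with hw0 | hw0
  · have hxw : f x < f w := by
      by_contra! h
      exact hw.1.not_ge (hmax ⟨⟨hy.1.trans hw.1.le, hw0⟩, h⟩)
    exact ⟨(mem_preimage.mp hfy).trans_lt hxw, hup w ⟨hy.1.trans hw.1.le, hw0⟩⟩
  · exact ⟨(mem_preimage.mp hfy).trans_lt (hlow w ⟨hw0.le, hw.2.le⟩),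
      hγ.apply_lt_of_pos (hc.mono (Icc_subset_Icc (by norm_num) le_rfl)) hf0 hpos ⟨hw0.le, hw.2⟩⟩

lemma exists_apply_le_of_not_radialDeparture (hc : ContinuousOn f (Icc (-1) 1)) (hf0 : f 0 = 0)
    {ym yp γ x : ℝ} (hym : -1 ≤ ym)
    (hnoRD : ¬∃ y₁ y₂, RadialDeparture f y₁ y₂ ∧ ym ≤ y₁ ∧ yp < y₂)
    (hγ : Departure f γ) (hpos : 0 < f γ) (hyp : yp < γ) (hx : x ∈ Icc ym 0)
    (hup : ∀ w ∈ Icc x 0, f w < f γ) : ∃ z ∈ Icc 0 γ, f z ≤ f x := by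
  by_contra! hlow
  obtain ⟨y, hxy, hy⟩ := exists_posRD hc hf0 hγ hpos (hym.trans hx.1) hx.2 hlow hup
  exact hnoRD ⟨y, γ, Or.inl hy, hx.1.trans hxy, hyp⟩

lemma exists_last_apply_eq {a c : ℝ} (hc : ContinuousOn f (Icc a 0)) (hf0 : f 0 = 0)
    (hcpos : 0 < c) (hmem : ∃ y ∈ Icc a 0, f y = c) :
    ∃ d ∈ Icc a 0, f d = c ∧ ∀ x ∈ Ioc d 0, f x < c := by
  have hK : IsClosed (Icc a 0 ∩ f ⁻¹' {c}) :=
    hc.preimage_isClosed_of_isClosed isClosed_Icc isClosed_singleton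
  obtain ⟨d, ⟨hd, hfd⟩, hmax⟩ :=
    (isCompact_Icc.of_isClosed_subset hK inter_subset_left).exists_isGreatest hmem
  refine ⟨d, hd, hfd, fun x hx => ?_⟩
  by_contra! hle
  obtain ⟨z, hz, hfz⟩ := intermediate_value_Icc' hx.2 (hc.mono (Icc_subset_Icc (hd.1.trans
    hx.1.le) le_rfl)) (show c ∈ Icc (f 0) (f x) by rw [hf0]; exact ⟨hcpos.le, hle⟩)
  exact hx.1.not_ge ((hmax ⟨⟨hd.1.trans (hx.1.le.trans hz.1), hz.2⟩, hfz⟩).trans' hz.1)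

/-- Otherwise both extreme values of `f` on `[ym, 0]` would be reached before `Ly`. -/
lemma exists_apply_eq_notMem_image_Ico {ym Ly : ℝ} (hc : ContinuousOn f (Icc ym Ly))
    (hym : ym ≤ 0) (hLy : IsLeast {L : ℝ | 0 < L ∧ f '' Icc ym 0 ⊆ f '' Icc 0 L} Ly) :
    ∃ y ∈ Icc ym 0, f y = f Ly ∧ f Ly ∉ f '' Ico 0 Ly := by
  have hLy0 := hLy.1.1
  have hsub : ¬ f '' Icc ym 0 ⊆ f '' Ico 0 Ly := by
    intro hsub
    have hcm : ContinuousOn f (Icc ym 0) := hc.mono (Icc_subset_Icc le_rfl hLy0.le)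
    obtain ⟨p, hp, hpmin⟩ := isCompact_Icc.exists_isMinOn ⟨0, hym, le_rfl⟩ hcm
    obtain ⟨q, hq, hqmax⟩ := isCompact_Icc.exists_isMaxOn ⟨0, hym, le_rfl⟩ hcm
    obtain ⟨a, ha, hfa⟩ := hsub ⟨p, hp, rfl⟩
    obtain ⟨b, hb, hfb⟩ := hsub ⟨q, hq, rfl⟩
    set L := max (max a b) (Ly / 2)
    have hab : uIcc a b ⊆ Icc 0 L :=
      uIcc_subset_Icc ⟨ha.1, (le_max_left a b).trans (le_max_left _ _)⟩
        ⟨hb.1, (le_max_right a b).trans (le_max_left _ _)⟩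
    have hL : L < Ly := max_lt (max_lt ha.2 hb.2) (half_lt_self hLy0)
    refine hL.not_ge (hLy.2 ⟨lt_max_of_lt_right (half_pos hLy0), ?_⟩)
    rintro _ ⟨y, hy, rfl⟩
    have hfy : f y ∈ uIcc (f a) (f b) := by
      rw [hfa, hfb]
      exact mem_uIcc_of_le (isMinOn_iff.mp hpmin y hy) (isMaxOn_iff.mp hqmax y hy)
    obtain ⟨z, hz, hfz⟩ := intermediate_value_uIcc
      (hc.mono (hab.trans (Icc_subset_Icc hym hL.le))) hfy
    exact ⟨z, hab hz, hfz⟩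
  obtain ⟨_, ⟨y, hy, rfl⟩, hnot⟩ := not_subset.mp hsub
  obtain ⟨x, hx, hfx⟩ := hLy.1.2 ⟨y, hy, rfl⟩
  obtain rfl : x = Ly := hx.2.eq_of_not_lt fun hlt => hnot ⟨x, ⟨hx.1, hlt⟩, hfx⟩
  exact ⟨y, hy, hfx.symm, hfx ▸ hnot⟩

section

variable {ym yp γp γ : ℝ}

lemma exists_apply_eq_of_not_subset_of_pos (hc : ContinuousOn f (Icc (-1) 1)) (hf0 : f 0 = 0)
    (hym : -1 ≤ ym) (hnoRD : ¬∃ y₁ y₂, RadialDeparture f y₁ y₂ ∧ ym ≤ y₁ ∧ yp < y₂)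
    (hγ : Departure f γ) (hpos : 0 < f γ) (hyp : yp < γ)
    (hnot : ¬ f '' Icc ym 0 ⊆ f '' Icc 0 γ) : ∃ y ∈ Icc ym 0, f y = f γ := by
  have hge : ∃ y ∈ Icc ym 0, f γ ≤ f y := by
    by_contra! hlt
    refine hnot ?_
    rintro _ ⟨y, hy, rfl⟩
    obtain ⟨z, hz, hfz⟩ := exists_apply_le_of_not_radialDeparture hc hf0 hym hnoRD hγ hpos hyp hy
      fun w hw => hlt w ⟨hy.1.trans hw.1, hw.2⟩
    obtain ⟨c, hc', hfc⟩ := intermediate_value_Icc hz.2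
      (hc.mono (Icc_subset_Icc (by linarith [hz.1]) hγ.2.1)) ⟨hfz, (hlt y hy).le⟩
    exact ⟨c, ⟨hz.1.trans hc'.1, hc'.2⟩, hfc⟩
  obtain ⟨y, hy, hfy⟩ := hge
  obtain ⟨c, hc', hfc⟩ := intermediate_value_Icc' hy.2
    (hc.mono (Icc_subset_Icc (hym.trans hy.1) zero_le_one))
    (show f γ ∈ Icc (f 0) (f y) by rw [hf0]; exact ⟨hpos.le, hfy⟩)
  exact ⟨c, ⟨hy.1.trans hc'.1, hc'.2⟩, hfc⟩

lemma exists_apply_eq_of_not_subset (hc : ContinuousOn f (Icc (-1) 1)) (hf0 : f 0 = 0)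
    (hym : -1 ≤ ym) (hnoRD : ¬∃ y₁ y₂, RadialDeparture f y₁ y₂ ∧ ym ≤ y₁ ∧ yp < y₂)
    (hγ : Departure f γ) (hyp : yp < γ) (hnot : ¬ f '' Icc ym 0 ⊆ f '' Icc 0 γ) :
    ∃ y ∈ Icc ym 0, f y = f γ := by
  rcases (hγ.apply_ne_zero hf0).lt_or_gt with hneg | hpos
  · obtain ⟨y, hy, hfy⟩ := exists_apply_eq_of_not_subset_of_pos (f := -f) hc.neg (by simp [hf0])
      hym (by simpa only [radialDeparture_neg_iff] using hnoRD) (departure_neg_iff_s12.mpr hγ)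
      (by simpa using hneg) hyp (by rwa [image_neg_subset_image_neg_iff])
    exact ⟨y, hy, neg_inj.mp hfy⟩
  · exact exists_apply_eq_of_not_subset_of_pos hc hf0 hym hnoRD hγ hpos hyp hnot

lemma exists_apply_le_of_prev (hc : ContinuousOn f (Icc 0 1)) (hf0 : f 0 = 0) (hpos : 0 < f γ)
    (hγpγ : γp ≤ γ) (hprev : γp = 0 ∨ (Departure f γp ∧ f γp * f γ < 0)) {z : ℝ}
    (hz : z ∈ Icc 0 γ) : ∃ p ∈ Icc γp γ, f p ≤ f z := by
  rcases hprev with rfl | ⟨hdep, hopp⟩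
  · exact ⟨z, hz, le_rfl⟩
  rcases le_or_gt γp z with h | h
  · exact ⟨z, ⟨h, hz.2⟩, le_rfl⟩
  · exact ⟨γp, ⟨le_rfl, hγpγ⟩,
      (hdep.lt_apply_of_neg hc hf0 (neg_of_mul_neg_left hopp hpos.le) ⟨hz.1, h⟩).le⟩

/-- `d` is the last point of `[ym, 0]` where `f = f γ`. On `[d, 0]` the function cannot drop below
`f '' [0, γ]`, since that would create a radial departure ending at `γ`. -/
lemma exists_leftDeparture_of_pos (hc : ContinuousOn f (Icc (-1) 1)) (hf0 : f 0 = 0)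
    (hym : -1 ≤ ym) (hnoRD : ¬∃ y₁ y₂, RadialDeparture f y₁ y₂ ∧ ym ≤ y₁ ∧ yp < y₂)
    (hγ : Departure f γ) (hpos : 0 < f γ) (hyp : yp < γ) (hmem : ∃ y ∈ Icc ym 0, f y = f γ)
    (hγpγ : γp ≤ γ) (hprev : γp = 0 ∨ (Departure f γp ∧ f γp * f γ < 0)) :
    ∃ d, ym ≤ d ∧ LeftDeparture f d ∧ f d = f γ ∧ f '' Icc d yp ⊆ f '' Icc γp γ ∧
      ∀ x ∈ Icc ym 0, ∀ γ', Departure f γ' → γ < γ' → f γ' * f γ < 0 → f x = f γ' → x < d := by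
  have hc01 : ContinuousOn f (Icc 0 1) := hc.mono (Icc_subset_Icc (by norm_num) le_rfl)
  obtain ⟨d, hd, hfd, hlt⟩ :=
    exists_last_apply_eq (hc.mono (Icc_subset_Icc hym (by norm_num))) hf0 hpos hmem
  have hd0 : d < 0 := hd.2.lt_of_ne fun h => hpos.ne' (hfd ▸ h ▸ hf0)
  have hlow : ∀ x ∈ Icc d 0, ∃ z ∈ Icc 0 γ, f z ≤ f x := by
    intro x hx
    rcases hx.1.eq_or_lt with rfl | hdx
    · exact ⟨0, ⟨le_rfl, hγ.1.le⟩, by rw [hf0, hfd]; exact hpos.le⟩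
    · exact exists_apply_le_of_not_radialDeparture hc hf0 hym hnoRD hγ hpos hyp
        ⟨hd.1.trans hx.1, hx.2⟩ fun w hw => hlt w ⟨hdx.trans_le hw.1, hw.2⟩
  refine ⟨d, hd.1, ⟨hym.trans hd.1, hd0, fun ⟨x, hx, hfx⟩ => (hlt x hx).ne (hfx.trans hfd)⟩,
    hfd, ?_, fun x hx γ' hγ' hγγ' hopp hfx => ?_⟩
  · rintro _ ⟨x, hx, rfl⟩
    have hbounds : (∃ p ∈ Icc γp γ, f p ≤ f x) ∧ f x ≤ f γ := by
      rcases le_or_gt x 0 with hx0 | hx0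
      · obtain ⟨z, hz, hfz⟩ := hlow x ⟨hx.1, hx0⟩
        obtain ⟨p, hp, hfp⟩ := exists_apply_le_of_prev hc01 hf0 hpos hγpγ hprev hz
        exact ⟨⟨p, hp, hfp.trans hfz⟩,
          hx.1.eq_or_lt.elim (fun h => h ▸ hfd.le) fun hdx => (hlt x ⟨hdx, hx0⟩).le⟩
      · exact ⟨exists_apply_le_of_prev hc01 hf0 hpos hγpγ hprev ⟨hx0.le, hx.2.trans hyp.le⟩,
          (hγ.apply_lt_of_pos hc01 hf0 hpos ⟨hx0.le, hx.2.trans_lt hyp⟩).le⟩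
    obtain ⟨⟨p, hp, hfp⟩, hfx⟩ := hbounds
    have hγp0 : 0 ≤ γp := hprev.elim (·.ge) (·.1.1.le)
    obtain ⟨c, hc', hfc⟩ := intermediate_value_Icc hp.2
      (hc01.mono (Icc_subset_Icc (hγp0.trans hp.1) hγ.2.1)) ⟨hfp, hfx⟩
    exact ⟨c, ⟨hp.1.trans hc'.1, hc'.2⟩, hfc⟩
  · by_contra! hdx
    obtain ⟨z, hz, hfz⟩ := hlow x ⟨hdx, hx.2⟩
    exact (hγ'.lt_apply_of_neg hc01 hf0 (neg_of_mul_neg_left hopp hpos.le)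
      ⟨hz.1, hz.2.trans_lt hγγ'⟩).not_ge (hfx ▸ hfz)

lemma exists_leftDeparture (hc : ContinuousOn f (Icc (-1) 1)) (hf0 : f 0 = 0)
    (hym : -1 ≤ ym) (hnoRD : ¬∃ y₁ y₂, RadialDeparture f y₁ y₂ ∧ ym ≤ y₁ ∧ yp < y₂)
    (hγ : Departure f γ) (hyp : yp < γ) (hmem : ∃ y ∈ Icc ym 0, f y = f γ)
    (hγpγ : γp ≤ γ) (hprev : γp = 0 ∨ (Departure f γp ∧ f γp * f γ < 0)) :
    ∃ d, ym ≤ d ∧ LeftDeparture f d ∧ f d = f γ ∧ f '' Icc d yp ⊆ f '' Icc γp γ ∧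
      ∀ x ∈ Icc ym 0, ∀ γ', Departure f γ' → γ < γ' → f γ' * f γ < 0 → f x = f γ' → x < d := by
  rcases (hγ.apply_ne_zero hf0).lt_or_gt with hneg | hpos
  · obtain ⟨y, hy, hfy⟩ := hmem
    obtain ⟨d, hd, hdep, hfd, himg, hmax⟩ := exists_leftDeparture_of_pos (f := -f) hc.neg
      (by simp [hf0]) hym (by simpa only [radialDeparture_neg_iff] using hnoRD)
      (departure_neg_iff_s12.mpr hγ) (by simpa using hneg) hyp ⟨y, hy, by simp [hfy]⟩ hγpγ
      (by simpa [departure_neg_iff_s12] using hprev)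
    refine ⟨d, hd, leftDeparture_neg_iff.mp hdep, by simpa using hfd,
      image_neg_subset_image_neg_iff.mp himg, fun x hx γ' hγ' hγγ' hopp hfx => ?_⟩
    exact hmax x hx γ' (departure_neg_iff_s12.mpr hγ') hγγ' (by simpa using hopp) (by simp [hfx])
  · exact exists_leftDeparture_of_pos hc hf0 hym hnoRD hγ hpos hyp hmem hγpγ hprev

end

lemma exists_apply_eq_of_le_isLeast {ym yp Ly γ : ℝ} (hc : ContinuousOn f (Icc (-1) 1))
    (hf0 : f 0 = 0) (hlr : LiftableRange f ym yp)
    (hLy : IsLeast {L : ℝ | 0 < L ∧ f '' Icc ym 0 ⊆ f '' Icc 0 L} Ly)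
    (hγ : Departure f γ) (hyp : yp < γ) (hγLy : γ ≤ Ly) : ∃ y ∈ Icc ym 0, f y = f γ := by
  obtain ⟨hym, hym0, -, -, -, hnoRD⟩ := hlr
  rcases hγLy.lt_or_eq with hlt | rfl
  · exact exists_apply_eq_of_not_subset hc hf0 hym hnoRD hγ hyp
      fun h => hlt.not_ge (hLy.2 ⟨hγ.1, h⟩)
  · obtain ⟨y, hy, hfy, -⟩ := exists_apply_eq_notMem_image_Ico
      (hc.mono (Icc_subset_Icc hym hγ.2.1)) hym0 hLy
    exact ⟨y, hy, hfy⟩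

lemma departure_of_isLeast {ym yp Ly : ℝ} (hc : ContinuousOn f (Icc (-1) 1))
    (hlr : LiftableRange f ym yp)
    (hLy : IsLeast {L : ℝ | 0 < L ∧ f '' Icc ym 0 ⊆ f '' Icc 0 L} Ly) : Departure f Ly := by
  obtain ⟨hym, hym0, -, -, hsub1, -⟩ := hlr
  have hLy1 : Ly ≤ 1 := hLy.2 ⟨one_pos, hsub1⟩
  obtain ⟨-, -, -, hfresh⟩ := exists_apply_eq_notMem_image_Ico
    (hc.mono (Icc_subset_Icc hym hLy1)) hym0 hLy
  exact ⟨hLy.1.1, hLy1, hfresh⟩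

section Enumeration

variable {t : ℝ → ℝ} {yp Ly : ℝ} {k : ℕ} {γ : ℕ → ℝ}

lemma not_contourPoint_of_mem_Ioo (hmono : StrictMonoOn γ (Iic (k + 1)))
    (henum : ∀ i, 1 ≤ i → i ≤ k → ContourPoint t (γ i) ∧ yp < γ i ∧ γ i < Ly)
    (hall : ∀ x, ContourPoint t x → yp < x → x < Ly → ∃ i, 1 ≤ i ∧ i ≤ k ∧ x = γ i)
    (hlast : γ (k + 1) = Ly)
    (hγ0 : (ContourPoint t (γ 0) ∧ ∀ x, ContourPoint t x → x < γ 1 → x ≤ γ 0) ∨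
           (γ 0 = 0 ∧ ∀ x, ContourPoint t x → ¬ x < γ 1))
    {i : ℕ} (hi1 : 1 ≤ i) (hik : i ≤ k + 1) {x : ℝ} (hx : x ∈ Ioo (γ (i - 1)) (γ i)) :
    ¬ ContourPoint t x := by
  intro hcp
  rcases hi1.eq_or_lt with rfl | hi1
  · rcases hγ0 with ⟨-, hle⟩ | ⟨-, hno⟩
    exacts [(hle x hcp hx.2).not_gt hx.1, hno x hcp hx.2]
  obtain ⟨j, hj1, hjk, rfl⟩ := hall x hcp ((henum (i - 1) (by omega) (by omega)).2.1.trans hx.1)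
    (hx.2.trans_le (hlast ▸ hmono.monotoneOn (by simp; omega) (by simp) hik))
  have := (hmono.lt_iff_lt (by simp; omega) (by simp; omega)).mp hx.1
  have := (hmono.lt_iff_lt (by simp; omega) (by simp; omega)).mp hx.2
  omega

lemma prev_eq_zero_or_apply_mul_apply_neg (hc : ContinuousOn t (Icc 0 1)) (ht0 : t 0 = 0)
    (hmono : StrictMonoOn γ (Iic (k + 1)))
    (henum : ∀ i, 1 ≤ i → i ≤ k → ContourPoint t (γ i) ∧ yp < γ i ∧ γ i < Ly)
    (hall : ∀ x, ContourPoint t x → yp < x → x < Ly → ∃ i, 1 ≤ i ∧ i ≤ k ∧ x = γ i)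
    (hlast : γ (k + 1) = Ly)
    (hγ0 : (ContourPoint t (γ 0) ∧ ∀ x, ContourPoint t x → x < γ 1 → x ≤ γ 0) ∨
           (γ 0 = 0 ∧ ∀ x, ContourPoint t x → ¬ x < γ 1))
    {i : ℕ} (hi1 : 1 ≤ i) (hik : i ≤ k + 1) (hγ : Departure t (γ i)) :
    γ (i - 1) = 0 ∨ (Departure t (γ (i - 1)) ∧ t (γ (i - 1)) * t (γ i) < 0) := by
  have hprev : γ (i - 1) = 0 ∨ ContourPoint t (γ (i - 1)) := by
    rcases hi1.eq_or_lt with rfl | hi1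
    · exact hγ0.symm.imp (·.1) (·.1)
    · exact Or.inr (henum (i - 1) (by omega) (by omega)).1
  refine hprev.imp_right fun hcp => ⟨hcp.1, hcp.apply_mul_apply_neg hc ht0 hγ
    (hmono (by simp; omega) (by simp; omega) (by omega)) fun x hx => ?_⟩
  exact not_contourPoint_of_mem_Ioo hmono henum hall hlast hγ0 hi1 hik hx

lemma departure_of_le_add_one {ym : ℝ} (hc : ContinuousOn t (Icc (-1) 1))
    (hlr : LiftableRange t ym yp)
    (hLy : IsLeast {L : ℝ | 0 < L ∧ t '' Icc ym 0 ⊆ t '' Icc 0 L} Ly) (hk : 1 ≤ k)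
    (hmono : ∀ i ≤ k, γ i < γ (i + 1))
    (henum : ∀ i, 1 ≤ i → i ≤ k → ContourPoint t (γ i) ∧ yp < γ i ∧ γ i < Ly)
    (hlast : γ (k + 1) = Ly) {i : ℕ} (hi1 : 1 ≤ i) (hik : i ≤ k + 1) :
    Departure t (γ i) ∧ yp < γ i ∧ γ i ≤ Ly := by
  rcases hik.lt_or_eq with hik | rfl
  · obtain ⟨hcp, hyp, hLy'⟩ := henum i hi1 (by omega)
    exact ⟨hcp.1, hyp, hLy'.le⟩
  · exact ⟨hlast ▸ departure_of_isLeast hc hlr hLy,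
      (henum k hk le_rfl).2.1.trans (hmono k le_rfl), hlast.le⟩

end Enumeration

theorem stmt12_general (t : ℝ → ℝ) (hpl : PiecewiseLinear t) (ht0 : t 0 = 0)
    (ym yp Ly : ℝ) (hlr : LiftableRange t ym yp)
    (hLy : IsLeast {L : ℝ | 0 < L ∧ t '' Icc ym 0 ⊆ t '' Icc 0 L} Ly)
    (k : ℕ) (hk : 1 ≤ k) (γ : ℕ → ℝ)
    (hmono : ∀ i ≤ k, γ i < γ (i + 1))
    (henum : ∀ i, 1 ≤ i → i ≤ k → ContourPoint t (γ i) ∧ yp < γ i ∧ γ i < Ly)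
    (hall : ∀ x, ContourPoint t x → yp < x → x < Ly → ∃ i, 1 ≤ i ∧ i ≤ k ∧ x = γ i)
    (hlast : γ (k + 1) = Ly)
    (hγ0 : (ContourPoint t (γ 0) ∧ ∀ x, ContourPoint t x → x < γ 1 → x ≤ γ 0) ∨
           (γ 0 = 0 ∧ ∀ x, ContourPoint t x → ¬ x < γ 1)) :
    ∃ δ : ℕ → ℝ, ym ≤ δ (k + 1) ∧ (∀ i, 1 ≤ i → i ≤ k → δ (i + 1) < δ i) ∧ δ 1 < 0 ∧
      ∀ i, 1 ≤ i → i ≤ k + 1 →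
        LeftDeparture t (δ i) ∧ t (δ i) = t (γ i) ∧
        t '' Icc (δ i) yp ⊆ t '' Icc (γ (i - 1)) (γ i) := by
  have hc := hpl.continuousOn
  have ⟨hym, _, _, _, _, hnoRD⟩ := hlr
  have hγmono : StrictMonoOn γ (Iic (k + 1)) :=
    strictMonoOn_Iic_of_lt_succ fun m hm => hmono m (by omega)
  have hdep {i} := departure_of_le_add_one (i := i) hc hlr hLy hk hmono henum hlast
  have hprev {i} (hi1 : 1 ≤ i) (hik : i ≤ k + 1) :=
    prev_eq_zero_or_apply_mul_apply_neg (hc.mono (Icc_subset_Icc (by norm_num) le_rfl)) ht0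
      hγmono henum hall hlast hγ0 hi1 hik (hdep hi1 hik).1
  have hδ (i : ℕ) (hi1 : 1 ≤ i) (hik : i ≤ k + 1) :=
    exists_leftDeparture hc ht0 hym hnoRD (hdep hi1 hik).1 (hdep hi1 hik).2.1
      (exists_apply_eq_of_le_isLeast hc ht0 hlr hLy (hdep hi1 hik).1 (hdep hi1 hik).2.1
        (hdep hi1 hik).2.2)
      (hγmono.monotoneOn (by simp; omega) (by simp; omega) (by omega)) (hprev hi1 hik)
  choose! δ hδ using hδ
  refine ⟨δ, (hδ (k + 1) (by omega) le_rfl).1, fun i hi1 hik => ?_,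
    (hδ 1 le_rfl (by omega)).2.1.2.1,
    fun i hi1 hik => ⟨(hδ i hi1 hik).2.1, (hδ i hi1 hik).2.2.1, (hδ i hi1 hik).2.2.2.1⟩⟩
  obtain ⟨hd, hdep', hfd, -⟩ := hδ (i + 1) (by omega) (by omega)
  have hopp := ((hprev (i := i + 1) (by omega) (by omega)).resolve_left
    (by simpa using (hdep hi1 (by omega)).1.1.ne')).2
  exact (hδ i hi1 (by omega)).2.2.2.2 _ ⟨hd, hdep'.2.1.le⟩ _ (hdep (by omega) (by omega)).1
    (hmono i hik) (by simpa [mul_comm] using hopp) hfd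

theorem stmt12 (t : ℝ → ℝ) (hpl : PiecewiseLinear t) (ht0 : t 0 = 0)
    (ym yp Ly : ℝ) (hlr : LiftableRange t ym yp) (hym : ym < 0)
    (hLy : IsLeast {L : ℝ | 0 < L ∧ t '' Icc ym 0 ⊆ t '' Icc 0 L} Ly)
    (k : ℕ) (hk : 1 ≤ k) (γ : ℕ → ℝ)
    (hmono : ∀ i ≤ k, γ i < γ (i + 1))
    (henum : ∀ i, 1 ≤ i → i ≤ k → ContourPoint t (γ i) ∧ yp < γ i ∧ γ i < Ly)
    (hall : ∀ x, ContourPoint t x → yp < x → x < Ly → ∃ i, 1 ≤ i ∧ i ≤ k ∧ x = γ i)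
    (hlast : γ (k + 1) = Ly)
    (hγ0 : (ContourPoint t (γ 0) ∧ ∀ x, ContourPoint t x → x < γ 1 → x ≤ γ 0) ∨
           (γ 0 = 0 ∧ ∀ x, ContourPoint t x → ¬ x < γ 1)) :
    ∃ δ : ℕ → ℝ, ym ≤ δ (k + 1) ∧ (∀ i, 1 ≤ i → i ≤ k → δ (i + 1) < δ i) ∧ δ 1 < 0 ∧
      ∀ i, 1 ≤ i → i ≤ k + 1 →
        LeftDeparture t (δ i) ∧ t (δ i) = t (γ i) ∧
        t '' Icc (δ i) yp ⊆ t '' Icc (γ (i - 1)) (γ i) :=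
  stmt12_general t hpl ht0 ym yp Ly hlr hLy k hk γ hmono henum hall hlast hγ0
end
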